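/- arXiv:0904.0441 — 8 statements merged into one kernel-verified Lean document; each statement's English description precedes it below -/
import Mathlib

section
/- Let B be a non-degenerate bilinear form on F_q^d with d ≥ 2, and λ ∈ F_q*. The product graph with vertex set F_q^d \ {0}, where vertices a, b are adjacent iff B(a,b) = λ, is q^{d-1}-regular on q^d - 1 vertices, and every eigenvalue of its adjacency matrix other than q^{d-1} has absolute value less than √(2 q^{d-1}). -/
/-!
For `a ≠ 0` the functional `B a` maps onto `F`, and for non-proportional `a, b` the map
`c ↦ (B a c, B b c)` maps onto `F × F`; counting fibres, every vertex has `q ^ (d - 1)`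
neighbours, two non-proportional vertices have `q ^ (d - 2)` common neighbours, and two distinct
proportional ones have none. Hence `A ^ 2 = q ^ (d - 2) J + E`, where `J` is the all-ones matrix
and `E` is supported on pairs of proportional vertices. An eigenvector of the symmetric matrix `A`
for `μ ≠ q ^ (d - 1)` is orthogonal to the constant vectors, so `μ ^ 2` is an eigenvalue of `E`,
and Gershgorin's theorem bounds it by
`(q ^ (d - 1) - q ^ (d - 2)) + (q - 2) q ^ (d - 2) < 2 q ^ (d - 1)`.
-/

open Finset

theorem AddMonoidHom.card_mul_card_fiber {G N : Type*} [AddGroup G] [Fintype G] [AddGroup N]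
    [Fintype N] [DecidableEq N] (f : G →+ N) (hf : Function.Surjective f) (y : N) :
    Fintype.card N * #{x | f x = y} = Fintype.card G := by
  have hsum := card_eq_sum_card_fiberwise (s := univ) (t := univ) (f := f) fun _ _ ↦ mem_univ _
  rw [card_univ] at hsum
  rw [hsum, sum_congr rfl fun z _ ↦ card_fiber_eq_of_mem_range f (hf z) (hf y), sum_const,
    card_univ, smul_eq_mul]

theorem LinearMap.prod_surjective_of_forall_ne_smul {K M : Type*} [Field K] [AddCommGroup M]
    [Module K M] {f g : M →ₗ[K] K} (hf : f ≠ 0) (hg : ∀ t : K, g ≠ t • f) :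
    Function.Surjective (f.prod g) := by
  obtain ⟨x, hx⟩ := surjective_of_ne_zero hf 1
  obtain ⟨k, hfk, hgk⟩ : ∃ k, f k = 0 ∧ g k = 1 := by
    by_contra! h
    refine hg (g x) (LinearMap.ext fun n ↦ ?_)
    have hker : f (n - f n • x) = 0 := by simp [hx]
    have hg_ker : g (n - f n • x) = 0 := by
      by_contra hne
      exact h ((g (n - f n • x))⁻¹ • (n - f n • x)) (by simp [hker])
        (by simp only [map_smul, smul_eq_mul]; exact inv_mul_cancel₀ hne)
    simp only [map_sub, map_smul, smul_eq_mul] at hg_ker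
    simp only [LinearMap.smul_apply, smul_eq_mul]
    linear_combination hg_ker
  rintro ⟨μ, ν⟩
  exact ⟨μ • x + (ν - μ * g x) • k, by simp [hx, hfk, hgk]⟩

theorem Fintype.card_filter_subtype_ne_zero {M : Type*} [Zero M] [Fintype M] [DecidableEq M]
    (P : M → Prop) [DecidablePred P] (h0 : ¬P 0) :
    #{v : {v : M // v ≠ 0} | P v} = #{v | P v} := by
  rw [← Fintype.card_subtype, ← Fintype.card_subtype]
  exact Fintype.card_congr (Equiv.subtypeSubtypeEquivSubtype fun hv h ↦ h0 (h ▸ hv))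

theorem LinearMap.SeparatingLeft.apply_ne_zero {R M : Type*} [CommSemiring R] [AddCommMonoid M]
    [Module R M] {B : LinearMap.BilinForm R M} (hB : B.SeparatingLeft) {a : M} (ha : a ≠ 0) :
    B a ≠ 0 :=
  fun h ↦ ha (hB a fun y ↦ by rw [h, LinearMap.zero_apply])

namespace LinearMap.BilinForm

variable {F M : Type*} [Field F] [Fintype F] [DecidableEq F] [AddCommGroup M] [Module F M]
  [Fintype M] {B : LinearMap.BilinForm F M}

theorem card_mul_card_level_set (hB : B.SeparatingLeft) {a : M} (ha : a ≠ 0) (μ : F) :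
    Fintype.card F * #{c | B a c = μ} = Fintype.card M :=
  (B a).toAddMonoidHom.card_mul_card_fiber (surjective_of_ne_zero (hB.apply_ne_zero ha)) μ

theorem card_mul_card_level_set_pair (hB : B.SeparatingLeft) {a b : M} (ha : a ≠ 0)
    (hab : ∀ t : F, b ≠ t • a) (μ ν : F) :
    Fintype.card F ^ 2 * #{c | B a c = μ ∧ B b c = ν} = Fintype.card M := by
  have hsurj : Function.Surjective ((B a).prod (B b)) := by
    refine prod_surjective_of_forall_ne_smul (hB.apply_ne_zero ha) fun t h ↦ ?_
    refine hB.apply_ne_zero (sub_ne_zero.2 (hab t)) ?_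
    rw [map_sub, map_smul, h, sub_self]
  rw [sq, ← Fintype.card_prod,
    ← ((B a).prod (B b)).toAddMonoidHom.card_mul_card_fiber hsurj (μ, ν)]
  simp

end LinearMap.BilinForm

namespace Matrix

variable {n R : Type*} [Fintype n] [CommRing R] {A : Matrix n n R}

theorem sum_eq_zero_of_mulVec_eq_smul [NoZeroDivisors R] (hA : A.IsSymm) {k μ : R}
    (hrow : ∀ i, ∑ j, A i j = k) {v : n → R} (hv : A *ᵥ v = μ • v) (hμk : μ ≠ k) :
    ∑ i, v i = 0 := by
  have h : μ * ∑ i, v i = k * ∑ i, v i :=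
    calc μ * ∑ i, v i = ∑ i, ∑ j, A i j * v j := by
          rw [mul_sum]; exact sum_congr rfl fun i _ ↦ (congrFun hv i).symm
      _ = ∑ j, (∑ i, A j i) * v j := by
          rw [sum_comm]; simp_rw [sum_mul, hA.apply]
      _ = k * ∑ j, v j := by simp [hrow, mul_sum]
  exact (mul_eq_zero.1 (by rw [sub_mul, h, sub_self] : (μ - k) * ∑ i, v i = 0)).resolve_left
    (sub_ne_zero.2 hμk)

theorem hasEigenvalue_mul_self_sub_of_isSymm [NoZeroDivisors R] [DecidableEq n] (hA : A.IsSymm)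
    {k μ : R} (hrow : ∀ i, ∑ j, A i j = k) (hμ : Module.End.HasEigenvalue (toLin' A) μ)
    (hμk : μ ≠ k) (c : R) :
    Module.End.HasEigenvalue (toLin' (A * A - c • of fun _ _ ↦ 1)) (μ ^ 2) := by
  obtain ⟨v, hv⟩ := hμ.exists_hasEigenvector
  have hAv : A *ᵥ v = μ • v := by
    simpa [Module.End.mem_eigenspace_iff] using hv.1
  have hsum := sum_eq_zero_of_mulVec_eq_smul hA hrow hAv hμk
  refine Module.End.hasEigenvalue_of_hasEigenvector ⟨?_, hv.2⟩
  rw [Module.End.mem_eigenspace_iff, toLin'_apply, sub_mulVec, ← mulVec_mulVec, hAv, mulVec_smul,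
    hAv, smul_smul, ← sq]
  ext i
  simp [mulVec, dotProduct, ← mul_sum, hsum]

end Matrix

section ProductGraph

variable {F M : Type*} [Field F] [DecidableEq F] [AddCommGroup M] [Module F M]

def productGraphMatrix (B : LinearMap.BilinForm F M) (lam : F) :
    Matrix {v : M // v ≠ 0} {v : M // v ≠ 0} ℝ :=
  Matrix.of fun a b ↦ if B a b = lam then 1 else 0

variable {B : LinearMap.BilinForm F M} {lam : F}

theorem productGraphMatrix_isSymm (hS : B.IsSymm) : (productGraphMatrix B lam).IsSymm :=
  Matrix.IsSymm.ext fun a b ↦ by simp [productGraphMatrix, hS.eq a.1 b.1]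

variable [Fintype M] [DecidableEq M]

theorem sum_productGraphMatrix_apply (a : {v : M // v ≠ 0}) :
    ∑ b, productGraphMatrix B lam a b = #{b : {v : M // v ≠ 0} | B a b = lam} := by
  simp [productGraphMatrix, sum_boole]

theorem productGraphMatrix_mul_self_apply (hS : B.IsSymm) (a b : {v : M // v ≠ 0}) :
    (productGraphMatrix B lam * productGraphMatrix B lam) a b =
      #{c : {v : M // v ≠ 0} | B a c = lam ∧ B b c = lam} := by
  simp only [productGraphMatrix, Matrix.mul_apply, Matrix.of_apply, hS.eq _ b.1, mul_ite, mul_one,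
    mul_zero, ← ite_and, and_comm (a := B b _ = lam)]
  rw [sum_boole, Nat.cast_inj]

theorem card_common_neighbors_of_eq_smul (hlam : lam ≠ 0) {a b : {v : M // v ≠ 0}} {t : F}
    (ht : b.1 = t • a.1) (hba : b ≠ a) :
    #{c : {v : M // v ≠ 0} | B a c = lam ∧ B b c = lam} = 0 := by
  have ht1 : t ≠ 1 := by rintro rfl; exact hba (Subtype.ext (by simpa using ht))
  refine card_eq_zero.2 (filter_eq_empty_iff.2 fun c _ ⟨hac, hbc⟩ ↦ ht1 ?_)
  rw [ht, map_smul, LinearMap.smul_apply, hac, smul_eq_mul] at hbc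
  exact mul_right_cancel₀ hlam (hbc.trans (one_mul lam).symm)

variable [Fintype F]

theorem card_mul_card_neighbors (hB : B.SeparatingLeft) (hlam : lam ≠ 0)
    (a : {v : M // v ≠ 0}) :
    Fintype.card F * #{b : {v : M // v ≠ 0} | B a b = lam} = Fintype.card M := by
  rw [Fintype.card_filter_subtype_ne_zero (fun b ↦ B a b = lam) (by simpa using hlam.symm)]
  exact LinearMap.BilinForm.card_mul_card_level_set hB a.2 lam

theorem card_mul_card_common_neighbors (hB : B.SeparatingLeft) (hlam : lam ≠ 0)
    {a b : {v : M // v ≠ 0}} (hab : ∀ t : F, b.1 ≠ t • a.1) :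
    Fintype.card F ^ 2 * #{c : {v : M // v ≠ 0} | B a c = lam ∧ B b c = lam} =
      Fintype.card M := by
  rw [Fintype.card_filter_subtype_ne_zero (fun c ↦ B a c = lam ∧ B b c = lam)
    (by simp [hlam.symm])]
  exact LinearMap.BilinForm.card_mul_card_level_set_pair hB a.2 hab lam lam

theorem card_erase_filter_exists_eq_smul_le (a : {v : M // v ≠ 0}) :
    #{b ∈ univ.erase a | ∃ t : F, b.1 = t • a.1} ≤ Fintype.card F - 2 := by
  calc #{b ∈ univ.erase a | ∃ t : F, b.1 = t • a.1}
      = #(({b ∈ univ.erase a | ∃ t : F, b.1 = t • a.1}).map (Function.Embedding.subtype _)) :=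
        (card_map _).symm
    _ ≤ #(((univ.erase 0).erase 1).image fun t : F ↦ t • a.1) := by
        refine card_le_card fun x hx ↦ ?_
        obtain ⟨b, hb, rfl⟩ := mem_map.1 hx
        obtain ⟨hba, t, ht⟩ := by simpa using hb
        refine mem_image.2 ⟨t, ?_, ht.symm⟩
        simp only [mem_erase, mem_univ, and_true]
        refine ⟨?_, ?_⟩
        · rintro rfl; exact hba (Subtype.ext (by simpa using ht))
        · rintro rfl; exact b.2 (by simpa using ht)
    _ ≤ Fintype.card F - 2 := by
        refine card_image_le.trans ?_
        rw [card_erase_of_mem (by simp), card_erase_of_mem (mem_univ _), card_univ]; rfl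

theorem card_neighbors (hB : B.SeparatingLeft) (hlam : lam ≠ 0) {e : ℕ}
    (hM : Fintype.card M = Fintype.card F ^ (e + 1)) (a : {v : M // v ≠ 0}) :
    #{b : {v : M // v ≠ 0} | B a b = lam} = Fintype.card F ^ e := by
  refine Nat.eq_of_mul_eq_mul_left (Fintype.card_pos (α := F)) ?_
  rw [card_mul_card_neighbors hB hlam, hM, pow_succ']

theorem card_common_neighbors (hB : B.SeparatingLeft) (hlam : lam ≠ 0) {e : ℕ}
    (hM : Fintype.card M = Fintype.card F ^ (e + 2)) (a b : {v : M // v ≠ 0}) :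
    #{c : {v : M // v ≠ 0} | B a c = lam ∧ B b c = lam} =
      if b = a then Fintype.card F ^ (e + 1)
      else if ∃ t : F, b.1 = t • a.1 then 0 else Fintype.card F ^ e := by
  split_ifs with hba hab
  · subst hba
    simpa only [and_self] using card_neighbors hB hlam hM b
  · obtain ⟨t, ht⟩ := hab
    exact card_common_neighbors_of_eq_smul hlam ht hba
  · push Not at hab
    refine Nat.eq_of_mul_eq_mul_left (pow_pos (Fintype.card_pos (α := F)) 2) ?_
    rw [card_mul_card_common_neighbors hB hlam hab, hM, pow_add, mul_comm]

theorem sum_erase_abs_productGraphMatrix_mul_self_sub_le (hB : B.SeparatingLeft)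
    (hS : B.IsSymm) (hlam : lam ≠ 0) {e : ℕ} (hM : Fintype.card M = Fintype.card F ^ (e + 2))
    (a : {v : M // v ≠ 0}) :
    ∑ b ∈ univ.erase a,
        |(productGraphMatrix B lam * productGraphMatrix B lam) a b - (Fintype.card F : ℝ) ^ e| ≤
      ((Fintype.card F : ℝ) - 2) * (Fintype.card F : ℝ) ^ e := by
  set q := Fintype.card F
  calc _ = ∑ b ∈ univ.erase a, if ∃ t : F, b.1 = t • a.1 then (q : ℝ) ^ e else 0 :=
        sum_congr rfl fun b hb ↦ by
          rw [productGraphMatrix_mul_self_apply hS, card_common_neighbors hB hlam hM,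
            if_neg (ne_of_mem_erase hb)]
          split_ifs <;> simp [q]
    _ = #{b ∈ univ.erase a | ∃ t : F, b.1 = t • a.1} * (q : ℝ) ^ e := by
        rw [sum_ite, sum_const, sum_const_zero, add_zero, nsmul_eq_mul]
    _ ≤ ((q - 2 : ℕ) : ℝ) * (q : ℝ) ^ e := by
        gcongr; exact card_erase_filter_exists_eq_smul_le a
    _ = ((q : ℝ) - 2) * (q : ℝ) ^ e := by rw [Nat.cast_sub Fintype.one_lt_card, Nat.cast_two]

theorem abs_lt_sqrt_of_hasEigenvalue_productGraphMatrix (hB : B.SeparatingLeft) (hS : B.IsSymm)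
    (hlam : lam ≠ 0) (hd : 2 ≤ Module.finrank F M) {μ : ℝ}
    (hμ : Module.End.HasEigenvalue (Matrix.toLin' (productGraphMatrix B lam)) μ)
    (hμk : μ ≠ (Fintype.card F : ℝ) ^ (Module.finrank F M - 1)) :
    |μ| < √(2 * (Fintype.card F : ℝ) ^ (Module.finrank F M - 1)) := by
  obtain ⟨e, he⟩ : ∃ e, Module.finrank F M = e + 2 := ⟨_, (Nat.sub_add_cancel hd).symm⟩
  have hM : Fintype.card M = Fintype.card F ^ (e + 2) := he ▸ Module.card_eq_pow_finrank
  rw [he, show e + 2 - 1 = e + 1 from rfl] at hμk ⊢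
  have hrow (a) : ∑ b, productGraphMatrix B lam a b = (Fintype.card F : ℝ) ^ (e + 1) := by
    rw [sum_productGraphMatrix_apply, card_neighbors hB hlam (e := e + 1) hM a]; push_cast; rfl
  obtain ⟨x, hx⟩ := eigenvalue_mem_ball (Matrix.hasEigenvalue_mul_self_sub_of_isSymm
    (productGraphMatrix_isSymm hS) hrow hμ hμk ((Fintype.card F : ℝ) ^ e))
  simp only [Metric.mem_closedBall, Real.dist_eq, Matrix.sub_apply, Matrix.smul_apply,
    Matrix.of_apply, smul_eq_mul, mul_one, Real.norm_eq_abs] at hx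
  rw [productGraphMatrix_mul_self_apply hS, card_common_neighbors hB hlam hM, if_pos rfl] at hx
  have hradius := sum_erase_abs_productGraphMatrix_mul_self_sub_le hB hS hlam hM x
  push_cast at hx
  have hμ2 : μ ^ 2 ≤ 2 * (Fintype.card F : ℝ) ^ (e + 1) - 3 * (Fintype.card F : ℝ) ^ e := by
    have := (le_abs_self _).trans (hx.trans hradius)
    rw [pow_succ (Fintype.card F : ℝ) e] at this ⊢
    linarith
  have hqe : (0 : ℝ) < (Fintype.card F : ℝ) ^ e := by positivity
  rw [Real.lt_sqrt (abs_nonneg _), sq_abs]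
  linarith

end ProductGraph

theorem stmt5_general (F : Type) [Field F] [Fintype F] [DecidableEq F]
    (d : ℕ) (hd : 2 ≤ d)
    (B : LinearMap.BilinForm F (Fin d → F))
    (hB : B.Nondegenerate)
    (hsymm : ∀ x y, B x y = B y x)
    (lam : F) (hlam : lam ≠ 0) :
    Fintype.card {v : Fin d → F // v ≠ 0} = Fintype.card F ^ d - 1 ∧
    (∀ a : {v : Fin d → F // v ≠ 0},
      (Finset.univ.filter
          (fun b : {v : Fin d → F // v ≠ 0} => B a.1 b.1 = lam)).card
        = Fintype.card F ^ (d - 1)) ∧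
    ∀ μ : ℝ, Module.End.HasEigenvalue
        (Matrix.toLin' (Matrix.of (fun a b : {v : Fin d → F // v ≠ 0} =>
          if B a.1 b.1 = lam then (1 : ℝ) else 0))) μ →
      μ ≠ (Fintype.card F : ℝ) ^ (d - 1) →
      |μ| < Real.sqrt (2 * (Fintype.card F : ℝ) ^ (d - 1)) := by
  have hrank : Module.finrank F (Fin d → F) = d := Module.finrank_fin_fun F
  refine ⟨by simp, fun a ↦ card_neighbors hB.1 hlam ?_ a, fun μ hμ hμk ↦ ?_⟩
  · rw [Fintype.card_fun, Fintype.card_fin, Nat.sub_add_cancel (by omega)]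
  · have h := abs_lt_sqrt_of_hasEigenvalue_productGraphMatrix hB.1 ⟨hsymm⟩ hlam
      (by rwa [hrank]) hμ (by rwa [hrank])
    rwa [hrank] at h

theorem stmt5 (F : Type) [Field F] [Fintype F] [DecidableEq F]
    (hodd : Odd (Fintype.card F))
    (d : ℕ) (hd : 2 ≤ d)
    (B : LinearMap.BilinForm F (Fin d → F))
    (hB : B.Nondegenerate)
    (hsymm : ∀ x y, B x y = B y x)
    (lam : F) (hlam : lam ≠ 0) :
    Fintype.card {v : Fin d → F // v ≠ 0} = Fintype.card F ^ d - 1 ∧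
    (∀ a : {v : Fin d → F // v ≠ 0},
      (Finset.univ.filter
          (fun b : {v : Fin d → F // v ≠ 0} => B a.1 b.1 = lam)).card
        = Fintype.card F ^ (d - 1)) ∧
    ∀ μ : ℝ, Module.End.HasEigenvalue
        (Matrix.toLin' (Matrix.of (fun a b : {v : Fin d → F // v ≠ 0} =>
          if B a.1 b.1 = lam then (1 : ℝ) else 0))) μ →
      μ ≠ (Fintype.card F : ℝ) ^ (d - 1) →
      |μ| < Real.sqrt (2 * (Fintype.card F : ℝ) ^ (d - 1)) :=
  stmt5_general F d hd B hB hsymm lam hlam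
end

section
/- Let B be a non-degenerate bilinear form on F_q^d with d ≥ 2. If E, F ⊆ F_q^d satisfy |E||F| ≥ q^{d+1}, then every λ ∈ F_q* can be written as λ = B(x,y) with x ∈ E and y ∈ F; that is, F_q* ⊆ B(E,F). -/
/-!
Suppose no `x ∈ E`, `y ∈ F'` has `B x y = λ`. For `y ≠ 0` the level set
`A y = {x | B x y = λ}` is an affine hyperplane with `q ^ (d - 1)` points; nondegeneracy makes
`y ↦ B(·, y)` injective, so two distinct level sets meet in at most `q ^ (d - 2)` points. All
of them lie in the complement of `E`, and Cauchy–Schwarz for the multiplicity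
`x ↦ #{y | x ∈ A y}` on that complement yields `|E| (|F' \ {0}| + q - 1) ≤ q ^ d (q - 1)`,
which is incompatible with `|E| |F'| ≥ q ^ (d + 1)`.
-/

open Finset Module

namespace Finset

variable {ι α : Type*} [DecidableEq α]

lemma card_eq_sum_ite_mem {s T : Finset α} (hs : s ⊆ T) :
    #s = ∑ x ∈ T, if x ∈ s then 1 else 0 := by
  rw [sum_ite_mem, inter_eq_right.2 hs, card_eq_sum_ones]

theorem sq_sum_card_le_card_mul_sum_sum_card_inter {Y : Finset ι} {A : ι → Finset α}
    {T : Finset α} (hAT : ∀ i ∈ Y, A i ⊆ T) :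
    (∑ i ∈ Y, #(A i)) ^ 2 ≤ #T * ∑ i ∈ Y, ∑ j ∈ Y, #(A i ∩ A j) := by
  set S : α → ℕ := fun x => ∑ i ∈ Y, if x ∈ A i then 1 else 0
  have hsum : ∑ i ∈ Y, #(A i) = ∑ x ∈ T, S x := by
    rw [sum_congr rfl fun i hi => card_eq_sum_ite_mem (hAT i hi)]
    exact sum_comm
  have hsq : ∑ i ∈ Y, ∑ j ∈ Y, #(A i ∩ A j) = ∑ x ∈ T, S x ^ 2 := by
    have hinter : ∀ i ∈ Y, ∀ j ∈ Y, #(A i ∩ A j) =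
        ∑ x ∈ T, (if x ∈ A i then 1 else 0) * (if x ∈ A j then 1 else 0) := by
      intro i hi j _
      simp only [card_eq_sum_ite_mem (inter_subset_left.trans (hAT i hi)), ite_zero_mul_ite_zero,
        mem_inter, mul_one]
    simp only [S, sq, sum_mul_sum]
    rw [sum_congr rfl fun i hi => sum_congr rfl fun j hj => hinter i hi j hj,
      sum_congr rfl fun i _ => sum_comm, sum_comm]
  rw [hsum, hsq]
  exact sq_sum_le_card_mul_sum_sq

theorem sq_card_mul_le_of_card_inter_le [DecidableEq ι] {Y : Finset ι} {A : ι → Finset α}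
    {T : Finset α} {k l : ℕ} (hAT : ∀ i ∈ Y, A i ⊆ T) (hk : ∀ i ∈ Y, #(A i) = k)
    (hl : ∀ i ∈ Y, ∀ j ∈ Y, i ≠ j → #(A i ∩ A j) ≤ l) :
    (#Y * k) ^ 2 ≤ #T * (#Y * (k + (#Y - 1) * l)) := by
  have hrow : ∀ i ∈ Y, ∑ j ∈ Y, #(A i ∩ A j) ≤ k + (#Y - 1) * l := by
    intro i hi
    rw [← add_sum_erase Y _ hi, inter_self, hk i hi, ← card_erase_of_mem hi, ← smul_eq_mul]
    gcongr
    exact sum_le_card_nsmul _ _ _ fun j hj =>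
      hl i hi j (mem_of_mem_erase hj) (ne_of_mem_erase hj).symm
  calc (#Y * k) ^ 2 = (∑ i ∈ Y, #(A i)) ^ 2 := by
        rw [sum_congr rfl hk, sum_const, smul_eq_mul]
    _ ≤ #T * ∑ i ∈ Y, ∑ j ∈ Y, #(A i ∩ A j) :=
        sq_sum_card_le_card_mul_sum_sum_card_inter hAT
    _ ≤ #T * (#Y * (k + (#Y - 1) * l)) := by
      gcongr
      simpa using sum_le_card_nsmul _ _ _ hrow

end Finset

namespace Module.Dual

variable {K V : Type*} [Field K] [Fintype K] [DecidableEq K] [AddCommGroup V] [Module K V]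
  [Fintype V]

theorem card_filter_apply_eq {f : Dual K V} (hf : f ≠ 0) (c : K) :
    #{x | f x = c} = Fintype.card K ^ (finrank K V - 1) := by
  classical
  rw [AddMonoidHom.card_fiber_eq_of_mem_range f (LinearMap.surjective hf c)
    (LinearMap.surjective hf 0), ← Fintype.card_subtype, ← finrank_ker_add_one_of_ne_zero hf,
    Nat.add_sub_cancel, ← card_eq_pow_finrank]
  exact Fintype.card_congr (Equiv.refl _)

theorem card_filter_apply_eq_le (f : Dual K V) {c : K} (hc : c ≠ 0) :
    #{x | f x = c} ≤ Fintype.card K ^ (finrank K V - 1) := by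
  rcases eq_or_ne f 0 with rfl | hf
  · simp [hc.symm]
  · exact (card_filter_apply_eq hf c).le

/-- Both equations cut out a fibre of `f` restricted to the hyperplane `ker (f - g)`. -/
theorem card_filter_apply_eq_and_apply_eq_le {f g : Dual K V} (hfg : f ≠ g) {c : K}
    (hc : c ≠ 0) : #{x | f x = c ∧ g x = c} ≤ Fintype.card K ^ (finrank K V - 2) := by
  classical
  set W := LinearMap.ker (f - g)
  have hW : finrank K W + 1 = finrank K V := finrank_ker_add_one_of_ne_zero (sub_ne_zero.2 hfg)
  have hmap : ({x | f x = c ∧ g x = c} : Finset V) =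
      ({w | f w = c} : Finset W).map (Function.Embedding.subtype _) := by
    ext x
    simp only [mem_filter, mem_univ, true_and, mem_map, Function.Embedding.subtype_apply,
      Subtype.exists, exists_and_right, exists_eq_right, W, LinearMap.mem_ker,
      LinearMap.sub_apply, sub_eq_zero]
    constructor
    · rintro ⟨hf, hg⟩
      exact ⟨hf.trans hg.symm, hf⟩
    · rintro ⟨hfg, hf⟩
      exact ⟨hf, hfg ▸ hf⟩
  rw [hmap, card_map]
  exact (card_filter_apply_eq_le (f.domRestrict W) hc).trans (by rw [← hW]; rfl)

end Module.Dual

namespace LinearMap.BilinForm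

variable {K V : Type*} [Field K] [Fintype K] [DecidableEq K] [AddCommGroup V] [Module K V]
  [Fintype V] [DecidableEq V]

theorem card_mul_le_of_forall_apply_ne {B : LinearMap.BilinForm K V} (hB : B.SeparatingRight)
    (hV : 2 ≤ finrank K V) {lam : K} (hlam : lam ≠ 0) {E Y : Finset V} (hY : 0 ∉ Y)
    (hEY : ∀ x ∈ E, ∀ y ∈ Y, B x y ≠ lam) :
    #E * (#Y + (Fintype.card K - 1)) ≤ Fintype.card K ^ finrank K V * (Fintype.card K - 1) := by
  set q := Fintype.card K
  obtain ⟨m, hm⟩ : ∃ m, finrank K V = m + 2 := ⟨_, (Nat.sub_add_cancel hV).symm⟩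
  have hcard : Fintype.card V = q ^ finrank K V := card_eq_pow_finrank
  have hE : #E ≤ q ^ finrank K V := hcard ▸ card_le_univ E
  rcases Y.eq_empty_or_nonempty with rfl | hYne
  · simpa using Nat.mul_le_mul_right (q - 1) hE
  have hflip : Function.Injective B.flip :=
    LinearMap.ker_eq_bot.1 (separatingRight_iff_flip_ker_eq_bot.1 hB)
  set A : V → Finset V := fun y => {x | B.flip y x = lam}
  have hk : ∀ y ∈ Y, #(A y) = q ^ (m + 1) := fun y hy => by
    have hy0 : B.flip y ≠ 0 := (hflip.ne_iff' (map_zero _)).2 (ne_of_mem_of_not_mem hy hY)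
    exact (Module.Dual.card_filter_apply_eq hy0 lam).trans (by rw [hm]; rfl)
  have hl : ∀ y ∈ Y, ∀ y' ∈ Y, y ≠ y' → #(A y ∩ A y') ≤ q ^ m := by
    intro y _ y' _ hyy'
    simpa only [A, ← filter_and, hm, Nat.add_sub_cancel] using
      Module.Dual.card_filter_apply_eq_and_apply_eq_le (hflip.ne hyy') hlam
  have hAE : ∀ y ∈ Y, A y ⊆ Eᶜ := fun y hy x hx =>
    mem_compl.2 fun hxE => hEY x hxE y hy (mem_filter.1 hx).2
  have hsecond := sq_card_mul_le_of_card_inter_le hAE hk hl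
  rw [card_compl, hcard, hm] at hsecond
  rw [hm] at hE ⊢
  have hq : 1 ≤ q := Fintype.card_pos
  have hb : 1 ≤ #Y := hYne.card_pos
  have hcancel : #Y * q ^ m * (#Y * q ^ (m + 2)) ≤
      #Y * q ^ m * ((q ^ (m + 2) - #E) * (q + #Y - 1)) := by
    zify [hE, hb, hq] at hsecond ⊢
    push_cast [Nat.cast_sub (show 1 ≤ q + #Y by omega)]
    linear_combination hsecond
  have h := Nat.le_of_mul_le_mul_left hcancel (by positivity)
  zify [hE, hb, hq] at h ⊢
  push_cast [Nat.cast_sub (show 1 ≤ q + #Y by omega)] at h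
  nlinarith

end LinearMap.BilinForm

theorem stmt7_general (F : Type) [Field F] [Fintype F] [DecidableEq F]
    (d : ℕ) (hd : 2 ≤ d)
    (B : LinearMap.BilinForm F (Fin d → F))
    (hB : B.Nondegenerate)
    (E F' : Finset (Fin d → F))
    (hEF : Fintype.card F ^ (d + 1) ≤ E.card * F'.card) :
    ∀ lam : F, lam ≠ 0 → ∃ x ∈ E, ∃ y ∈ F', B x y = lam := by
  intro lam hlam
  by_contra! hno
  set q := Fintype.card F
  have hq : 1 < q := Fintype.one_lt_card
  have hbound := B.card_mul_le_of_forall_apply_ne hB.2 (by simpa using hd) hlam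
    (notMem_erase 0 F') fun x hx y hy => hno x hx y (mem_of_mem_erase hy)
  rw [finrank_fin_fun] at hbound
  have hF' : #F' ≤ #(F'.erase 0) + (q - 1) := by
    have := pred_card_le_card_erase (s := F') (a := 0)
    omega
  have : q ^ (d + 1) < q ^ (d + 1) :=
    calc q ^ (d + 1) ≤ #E * #F' := hEF
      _ ≤ #E * (#(F'.erase 0) + (q - 1)) := Nat.mul_le_mul_left _ hF'
      _ ≤ q ^ d * (q - 1) := hbound
      _ < q ^ d * q := Nat.mul_lt_mul_of_pos_left (by omega) (by positivity)
      _ = q ^ (d + 1) := (pow_succ q d).symm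
  exact lt_irrefl _ this

theorem stmt7 (F : Type) [Field F] [Fintype F] [DecidableEq F]
    (hodd : Odd (Fintype.card F))
    (d : ℕ) (hd : 2 ≤ d)
    (B : LinearMap.BilinForm F (Fin d → F))
    (hB : B.Nondegenerate)
    (E F' : Finset (Fin d → F))
    (hEF : Fintype.card F ^ (d + 1) ≤ E.card * F'.card) :
    ∀ lam : F, lam ≠ 0 → ∃ x ∈ E, ∃ y ∈ F', B x y = lam :=
  stmt7_general F d hd B hB E F' hEF
end

section
/- Let B be a non-degenerate bilinear form on F_q^d, d ≥ 1, and fix λ ∈ F_q. Define the sum-product graph on vertex set F_q × F_q^d where (a,b) and (c,d) are adjacent iff a + c + λ = B(b,d). This graph is q^d-regular on q^{d+1} vertices, and every eigenvalue of its adjacency matrix other than q^d has absolute value less than √(2 q^d). -/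
/-!
The column sums of the adjacency matrix `M` all equal `N = q ^ d`, so an eigenvector `v` for an
eigenvalue `μ ≠ N` is orthogonal to the all-ones vector. Two distinct vertices `(a, b)`, `(a', b')`
have no common neighbour if `b = b'`, and `N / q` of them otherwise, because nondegeneracy makes
`B (b - b')` a nonzero linear functional. Hence `M² = N • 1 + (N / q) • (J - K)`, where `J` is the
all-ones matrix and `K (a, b) (a', b') = [b = b']`. Since `Jv = 0` and
`vᵀ K v = ∑ b, (∑ a, v (a, b))² ≥ 0`, we get `μ² ‖v‖² = vᵀ M² v ≤ N ‖v‖²`, so `|μ| ≤ √N < √(2N)`.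
-/

open Finset Matrix

lemma card_filter_fst_eq_and {α β : Type*} [Fintype α] [Fintype β] [DecidableEq α]
    (f : β → α) (P : β → Prop) [DecidablePred P] :
    #{x : α × β | x.1 = f x.2 ∧ P x.2} = #{y | P y} :=
  card_nbij' Prod.snd (fun y => (f y, y)) (fun x hx => by simp_all)
    (fun y hy => by simp_all) (fun x hx => by simp_all [Prod.ext_iff]) (fun y _ => rfl)

lemma LinearMap.card_fiber_mul_card {F V : Type*} [Field F] [Fintype F] [DecidableEq F]
    [AddCommGroup V] [Module F V] [Fintype V] {φ : V →ₗ[F] F} (hφ : φ ≠ 0) (c : F) :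
    #{y | φ y = c} * Fintype.card F = Fintype.card V := by
  have hsurj : Function.Surjective φ := by
    obtain ⟨v, hv⟩ : ∃ v, φ v ≠ 0 := by
      by_contra! h; exact hφ (LinearMap.ext h)
    exact fun c => ⟨(c / φ v) • v, by simp [hv]⟩
  have hfibers : ∀ b, #{y | φ y = b} = #{y | φ y = c} := fun b =>
    AddMonoidHom.card_fiber_eq_of_mem_range φ.toAddMonoidHom (hsurj b) (hsurj c)
  rw [← card_univ (α := V), card_eq_sum_card_fiberwise (s := univ) (f := φ) (t := univ) (by simp)]
  simp [hfibers, mul_comm]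

namespace Matrix

variable {ι K : Type*} [Fintype ι] [Field K]

theorem of_ite_mul_self_apply {α : Type*} [NonAssocSemiring α]
    (R : ι → ι → Prop) [DecidableRel R] (i j : ι) :
    ((of fun i j => if R i j then (1 : α) else 0) *
      of fun i j => if R i j then (1 : α) else 0) i j = #{k | R i k ∧ R k j} := by
  simp only [mul_apply, of_apply, ite_zero_mul_ite_zero, mul_one, sum_boole]

theorem sum_eq_zero_of_mulVec_eq_smul_s8 {M : Matrix ι ι K} {r μ : K} {v : ι → K}
    (hcol : ∀ j, ∑ i, M i j = r) (hv : M *ᵥ v = μ • v) (hμ : μ ≠ r) : ∑ i, v i = 0 := by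
  have key : μ * ∑ i, v i = r * ∑ i, v i :=
    calc μ * ∑ i, v i = ∑ i, (M *ᵥ v) i := by simp [hv, mul_sum]
      _ = ∑ j, (∑ i, M i j) * v j := by
        simp only [mulVec, dotProduct, sum_mul]
        exact sum_comm
      _ = r * ∑ i, v i := by simp [hcol, mul_sum]
  by_contra h
  exact hμ (mul_right_cancel₀ h key)

theorem sq_le_of_mulVec_eq_smul [LinearOrder K] [IsStrictOrderedRing K] {M : Matrix ι ι K}
    {v : ι → K} {μ N : K} (hv0 : v ≠ 0) (hv : M *ᵥ v = μ • v)
    (h : v ⬝ᵥ ((M * M) *ᵥ v) ≤ N * (v ⬝ᵥ v)) : μ ^ 2 ≤ N := by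
  have hsq : (M * M) *ᵥ v = μ ^ 2 • v := by
    rw [← mulVec_mulVec, hv, mulVec_smul, hv, smul_smul, sq]
  have hpos : 0 < v ⬝ᵥ v :=
    lt_of_le_of_ne (sum_nonneg fun i _ => mul_self_nonneg (v i))
      (Ne.symm (dotProduct_self_eq_zero.not.mpr hv0))
  rw [hsq, dotProduct_smul, smul_eq_mul] at h
  exact le_of_mul_le_mul_right h hpos

end Matrix

section SumProductGraph

variable {F V : Type*} [Field F] [Fintype F] [DecidableEq F] [AddCommGroup V] [Module F V]
  [Fintype V] (B : LinearMap.BilinForm F V) (lam : F)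

def sumProductMatrix : Matrix (F × V) (F × V) ℝ :=
  Matrix.of fun p w => if p.1 + w.1 + lam = B p.2 w.2 then 1 else 0

lemma card_sumProduct_neighbors (p : F × V) :
    #{w : F × V | p.1 + w.1 + lam = B p.2 w.2} = Fintype.card V := by
  have key : ∀ w : F × V, p.1 + w.1 + lam = B p.2 w.2 ↔ w.1 = B p.2 w.2 - p.1 - lam ∧ True :=
    fun w => ⟨fun h => ⟨by linear_combination h, trivial⟩, fun h => by linear_combination h.1⟩
  simp_rw [key]
  simpa using card_filter_fst_eq_and (fun y => B p.2 y - p.1 - lam) (fun _ => True)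

variable {B}

lemma card_sumProduct_common_neighbors (hsymm : B.IsSymm) (p w : F × V) :
    #{u : F × V | p.1 + u.1 + lam = B p.2 u.2 ∧ u.1 + w.1 + lam = B u.2 w.2}
      = #{y : V | B (p.2 - w.2) y = p.1 - w.1} := by
  have key : ∀ u : F × V, (p.1 + u.1 + lam = B p.2 u.2 ∧ u.1 + w.1 + lam = B u.2 w.2) ↔
      (u.1 = B p.2 u.2 - p.1 - lam ∧ B (p.2 - w.2) u.2 = p.1 - w.1) := by
    intro u
    rw [hsymm.eq u.2 w.2, LinearMap.map_sub₂]
    constructor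
    · rintro ⟨h₁, h₂⟩; exact ⟨by linear_combination h₁, by linear_combination h₂ - h₁⟩
    · rintro ⟨h₁, h₂⟩; exact ⟨by linear_combination h₁, by linear_combination h₁ + h₂⟩
  simp_rw [key]
  exact card_filter_fst_eq_and (fun y => B p.2 y - p.1 - lam)
    (fun y => B (p.2 - w.2) y = p.1 - w.1)

lemma sumProductMatrix_sum_col (hsymm : B.IsSymm) (w : F × V) :
    ∑ p, sumProductMatrix B lam p w = Fintype.card V := by
  have hswap : ∀ p : F × V, p.1 + w.1 + lam = B p.2 w.2 ↔ w.1 + p.1 + lam = B w.2 p.2 :=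
    fun p => by rw [add_comm p.1, hsymm.eq]
  simp only [sumProductMatrix, of_apply, hswap, sum_boole, card_sumProduct_neighbors]

variable [DecidableEq V]

lemma sumProductMatrix_mul_self_apply (hB : B.Nondegenerate) (hsymm : B.IsSymm) (p w : F × V) :
    (sumProductMatrix B lam * sumProductMatrix B lam) p w =
      (if p = w then (Fintype.card V : ℝ) else 0) +
        if p.2 = w.2 then 0 else (Fintype.card V : ℝ) / Fintype.card F := by
  rw [sumProductMatrix, Matrix.of_ite_mul_self_apply, card_sumProduct_common_neighbors lam hsymm]
  by_cases h₂ : p.2 = w.2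
  · by_cases h₁ : p.1 = w.1
    · simp [h₁, h₂, Prod.ext_iff]
    · simp [h₁, h₂, Prod.ext_iff, eq_sub_iff_add_eq, Ne.symm h₁]
  · have hφ : B (p.2 - w.2) ≠ 0 := by
      rw [map_sub, sub_ne_zero]
      exact (LinearMap.ker_eq_bot.mp hB.ker_eq_bot).ne h₂
    have hq : (Fintype.card F : ℝ) ≠ 0 := by positivity
    rw [if_neg (fun h => h₂ (congrArg Prod.snd h)), if_neg h₂, zero_add, eq_div_iff hq]
    exact_mod_cast LinearMap.card_fiber_mul_card hφ (p.1 - w.1)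

lemma sumProductMatrix_mul_self_mulVec (hB : B.Nondegenerate) (hsymm : B.IsSymm)
    {v : F × V → ℝ} (hv : ∑ p, v p = 0) (p : F × V) :
    ((sumProductMatrix B lam * sumProductMatrix B lam) *ᵥ v) p =
      (Fintype.card V : ℝ) * v p - (Fintype.card V / Fintype.card F : ℝ) * ∑ a, v (a, p.2) := by
  set N : ℝ := (Fintype.card V : ℝ)
  set c : ℝ := (Fintype.card V : ℝ) / Fintype.card F
  calc ((sumProductMatrix B lam * sumProductMatrix B lam) *ᵥ v) p
      = ∑ w, ((if p = w then N * v w else 0) + (c * v w - if p.2 = w.2 then c * v w else 0)) := by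
        refine sum_congr rfl fun w _ => ?_
        beta_reduce
        rw [sumProductMatrix_mul_self_apply lam hB hsymm]
        split_ifs <;> ring
    _ = N * v p + (c * ∑ w, v w - ∑ a, c * v (a, p.2)) := by
        rw [sum_add_distrib, sum_ite_eq, if_pos (mem_univ _), sum_sub_distrib, mul_sum,
          Fintype.sum_prod_type (fun w => if p.2 = w.2 then c * v w else 0)]
        simp only [sum_ite_eq, mem_univ, if_true]
    _ = N * v p - c * ∑ a, v (a, p.2) := by rw [hv, ← mul_sum]; ring

lemma sumProductMatrix_quadratic_form_le (hB : B.Nondegenerate) (hsymm : B.IsSymm)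
    {v : F × V → ℝ} (hv : ∑ p, v p = 0) :
    v ⬝ᵥ ((sumProductMatrix B lam * sumProductMatrix B lam) *ᵥ v) ≤
      Fintype.card V * (v ⬝ᵥ v) := by
  set c : ℝ := (Fintype.card V : ℝ) / Fintype.card F
  calc v ⬝ᵥ ((sumProductMatrix B lam * sumProductMatrix B lam) *ᵥ v)
      = Fintype.card V * (v ⬝ᵥ v) - c * ∑ b : V, (∑ a, v (a, b)) ^ 2 := by
        simp only [dotProduct, sumProductMatrix_mul_self_mulVec lam hB hsymm hv, mul_sub,
          sum_sub_distrib]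
        congr 1
        · rw [mul_sum]
          exact sum_congr rfl fun p _ => by ring
        · rw [Fintype.sum_prod_type_right, mul_sum]
          refine sum_congr rfl fun b _ => ?_
          dsimp only
          rw [← sum_mul]
          ring
    _ ≤ Fintype.card V * (v ⬝ᵥ v) :=
        sub_le_self _ (mul_nonneg (by positivity) (sum_nonneg fun _ _ => sq_nonneg _))

theorem sumProductMatrix_abs_le_sqrt_of_hasEigenvalue (hB : B.Nondegenerate) (hsymm : B.IsSymm)
    {μ : ℝ} (hμ : Module.End.HasEigenvalue (toLin' (sumProductMatrix B lam)) μ)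
    (hμN : μ ≠ Fintype.card V) : |μ| ≤ √(Fintype.card V) := by
  obtain ⟨v, hv⟩ := hμ.exists_hasEigenvector
  have hMv : sumProductMatrix B lam *ᵥ v = μ • v := by
    simpa only [toLin'_apply] using hv.apply_eq_smul
  have hsum := sum_eq_zero_of_mulVec_eq_smul_s8 (sumProductMatrix_sum_col lam hsymm) hMv hμN
  exact Real.abs_le_sqrt <| sq_le_of_mulVec_eq_smul hv.2 hMv <|
    sumProductMatrix_quadratic_form_le lam hB hsymm hsum

end SumProductGraph

theorem stmt8_general (F : Type) [Field F] [Fintype F] [DecidableEq F]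
    (d : ℕ)
    (B : LinearMap.BilinForm F (Fin d → F))
    (hB : B.Nondegenerate)
    (hsymm : ∀ x y, B x y = B y x)
    (lam : F) :
    Fintype.card (F × (Fin d → F)) = Fintype.card F ^ (d + 1) ∧
    (∀ p : F × (Fin d → F),
      (Finset.univ.filter
          (fun w : F × (Fin d → F) => p.1 + w.1 + lam = B p.2 w.2)).card
        = Fintype.card F ^ d) ∧
    ∀ μ : ℝ, Module.End.HasEigenvalue
        (Matrix.toLin' (Matrix.of (fun p w : F × (Fin d → F) =>
          if p.1 + w.1 + lam = B p.2 w.2 then (1 : ℝ) else 0))) μ →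
      μ ≠ (Fintype.card F : ℝ) ^ d →
      |μ| < Real.sqrt (2 * (Fintype.card F : ℝ) ^ d) := by
  have hV : Fintype.card (Fin d → F) = Fintype.card F ^ d := by simp
  refine ⟨by simp [pow_succ, mul_comm], fun p => hV ▸ card_sumProduct_neighbors B lam p, ?_⟩
  intro μ hμ hμN
  have hq : (0 : ℝ) < (Fintype.card F : ℝ) ^ d := by positivity
  calc |μ| ≤ √((Fintype.card F : ℝ) ^ d) := by
        simpa [hV] using sumProductMatrix_abs_le_sqrt_of_hasEigenvalue lam hB ⟨hsymm⟩ hμ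
          (by simpa [hV] using hμN)
    _ < √(2 * (Fintype.card F : ℝ) ^ d) := Real.sqrt_lt_sqrt hq.le (by linarith)

theorem stmt8 (F : Type) [Field F] [Fintype F] [DecidableEq F]
    (hodd : Odd (Fintype.card F))
    (d : ℕ) (hd : 1 ≤ d)
    (B : LinearMap.BilinForm F (Fin d → F))
    (hB : B.Nondegenerate)
    (hsymm : ∀ x y, B x y = B y x)
    (lam : F) :
    Fintype.card (F × (Fin d → F)) = Fintype.card F ^ (d + 1) ∧
    (∀ p : F × (Fin d → F),
      (Finset.univ.filter
          (fun w : F × (Fin d → F) => p.1 + w.1 + lam = B p.2 w.2)).card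
        = Fintype.card F ^ d) ∧
    ∀ μ : ℝ, Module.End.HasEigenvalue
        (Matrix.toLin' (Matrix.of (fun p w : F × (Fin d → F) =>
          if p.1 + w.1 + lam = B p.2 w.2 then (1 : ℝ) else 0))) μ →
      μ ≠ (Fintype.card F : ℝ) ^ d →
      |μ| < Real.sqrt (2 * (Fintype.card F : ℝ) ^ d) :=
  stmt8_general F d B hB hsymm lam
end

section
/- Let B be a non-degenerate bilinear form on F_q^d and λ ∈ F_q. If E, F ⊆ F_q × F_q^d satisfy |E||F| ≥ 2q^{d+2}, then there exist (a,b) ∈ E and (c,d) ∈ F with a + c + λ = B(b,d). -/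
/-! For `r = (c, e)` let `H r = {(a, b) | a + c + λ = B b e}`. Each `H r` has `q ^ d` points, and two
distinct ones meet in at most `q ^ (d - 1)` points: the intersection is a fiber of the nonzero
functional `B · (e - e')`, or empty when `e = e'`. Hence the incidence counts
`h p = #{r ∈ F' | p ∈ H r}` satisfy `∑ h = |F'| q ^ d` and `N ∑ h ^ 2 ≤ N |F'| q ^ d + (|F'| q ^ d) ^ 2`
with `N = q ^ (d + 1)`, as if the `H r` were independent random sets. If `E` meets no `H r`, then `h`
vanishes on `E`, and Cauchy–Schwarz on the complement of `E` gives
`|E| (N + |F'| q ^ d) ≤ N ^ 2`, so `|E| |F'| ≤ q ^ (d + 2)`. -/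

open Finset

section Incidences

variable {α ι : Type*} [Fintype α] [DecidableEq α]

theorem sum_card_filter_mem (s : Finset ι) (H : ι → Finset α) :
    ∑ x, #{i ∈ s | x ∈ H i} = ∑ i ∈ s, #(H i) := by
  simpa [bipartiteAbove, bipartiteBelow, filter_mem_eq_inter] using
    sum_card_bipartiteAbove_eq_sum_card_bipartiteBelow (s := univ) (t := s) (fun x i => x ∈ H i)

theorem sum_card_filter_mem_sq (s : Finset ι) (H : ι → Finset α) :
    ∑ x, #{i ∈ s | x ∈ H i} ^ 2 = ∑ i ∈ s, ∑ j ∈ s, #(H i ∩ H j) := by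
  have hsq : ∀ x, #{i ∈ s | x ∈ H i} ^ 2 = #{ij ∈ s ×ˢ s | x ∈ H ij.1 ∩ H ij.2} := fun x => by
    rw [sq, ← card_product, ← filter_product]
    simp only [mem_inter]
  simp_rw [hsq, sum_card_filter_mem, sum_product]

variable {s : Finset ι} {H : ι → Finset α} {k : ℕ}

theorem card_mul_sum_card_filter_mem_sq_le [DecidableEq ι] (hcard : ∀ i ∈ s, #(H i) = k)
    (hinter : ∀ i ∈ s, ∀ j ∈ s, i ≠ j → Fintype.card α * #(H i ∩ H j) ≤ k ^ 2) :
    Fintype.card α * ∑ x, #{i ∈ s | x ∈ H i} ^ 2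
      ≤ Fintype.card α * (#s * k) + (#s * k) ^ 2 := by
  have hterm : ∀ i ∈ s, ∀ j ∈ s,
      Fintype.card α * #(H i ∩ H j) ≤ (if i = j then Fintype.card α * k else 0) + k ^ 2 := by
    intro i hi j hj
    by_cases hij : i = j
    · simp [hij, hcard j hj]
    · simpa [hij] using hinter i hi j hj hij
  calc Fintype.card α * ∑ x, #{i ∈ s | x ∈ H i} ^ 2
      = ∑ i ∈ s, ∑ j ∈ s, Fintype.card α * #(H i ∩ H j) := by
        simp_rw [sum_card_filter_mem_sq, mul_sum]
    _ ≤ ∑ i ∈ s, ∑ j ∈ s, ((if i = j then Fintype.card α * k else 0) + k ^ 2) :=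
        sum_le_sum fun i hi => sum_le_sum fun j hj => hterm i hi j hj
    _ = Fintype.card α * (#s * k) + (#s * k) ^ 2 := by
        rw [sum_congr rfl fun i hi => by rw [sum_add_distrib, sum_ite_eq s i, if_pos hi]]
        simp only [sum_add_distrib, sum_const, smul_eq_mul]
        ring

theorem card_mul_le_sq_of_forall_disjoint (hcard : ∀ i ∈ s, #(H i) = k)
    (hinter : ∀ i ∈ s, ∀ j ∈ s, i ≠ j → Fintype.card α * #(H i ∩ H j) ≤ k ^ 2)
    {E : Finset α} (hE : ∀ i ∈ s, Disjoint E (H i)) :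
    #E * (Fintype.card α + #s * k) ≤ Fintype.card α ^ 2 := by
  classical
  set deg : α → ℕ := fun x => #{i ∈ s | x ∈ H i}
  have hdeg : ∀ x ∉ Eᶜ, deg x = 0 := fun x hx => by
    rw [mem_compl, not_not] at hx
    exact card_eq_zero.2 <| filter_eq_empty_iff.2 fun i hi => disjoint_left.1 (hE i hi) hx
  have hsum : ∑ x ∈ Eᶜ, deg x = #s * k := by
    rw [sum_subset (subset_univ _) fun x _ => hdeg x, sum_card_filter_mem, sum_const_nat hcard]
  have hsum_sq : ∑ x ∈ Eᶜ, deg x ^ 2 = ∑ x, deg x ^ 2 :=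
    sum_subset (subset_univ _) fun x _ hx => by rw [hdeg x hx, zero_pow two_ne_zero]
  have hcs : (#s * k) ^ 2 ≤ #Eᶜ * ∑ x, deg x ^ 2 := hsum ▸ hsum_sq ▸ sq_sum_le_card_mul_sum_sq
  have hvar := card_mul_sum_card_filter_mem_sq_le hcard hinter
  have hN : Fintype.card α = #E + #Eᶜ := by rw [add_comm, card_compl_add_card]
  set N := Fintype.card α
  set a := #s * k
  have key : N * a ^ 2 ≤ #Eᶜ * (N * a + a ^ 2) := calc
    N * a ^ 2 ≤ N * (#Eᶜ * ∑ x, deg x ^ 2) := Nat.mul_le_mul_left _ hcs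
    _ = #Eᶜ * (N * ∑ x, deg x ^ 2) := by ring
    _ ≤ #Eᶜ * (N * a + a ^ 2) := Nat.mul_le_mul_left _ hvar
  have hEa : #E * a ≤ #Eᶜ * N := by
    rcases Nat.eq_zero_or_pos a with ha | ha
    · simp [ha]
    · refine Nat.le_of_mul_le_mul_right ?_ ha
      rw [hN] at key ⊢
      linarith [key]
  calc #E * (N + a) = #E * N + #E * a := mul_add _ _ _
    _ ≤ #E * N + #Eᶜ * N := Nat.add_le_add_left hEa _
    _ = N ^ 2 := by rw [← add_mul, ← hN, sq]

end Incidences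

theorem card_filter_fst_eq_and_s10 {β γ : Type*} [Fintype β] [Fintype γ] [DecidableEq γ]
    (f : β → γ) (P : β → Prop) [DecidablePred P] :
    #{p : γ × β | p.1 = f p.2 ∧ P p.2} = #{b | P b} := by
  refine card_nbij' Prod.snd (fun b => (f b, b)) ?_ ?_ ?_ ?_ <;> intro x hx <;>
    simp_all [Prod.ext_iff]

section Hyperplanes

variable {K V : Type*} [Field K] [Fintype K] [DecidableEq K]
  [AddCommGroup V] [Module K V] [Fintype V]

theorem LinearMap.card_fiber_mul_card_eq (φ : V →ₗ[K] K) (hφ : φ ≠ 0) (c : K) :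
    #{v | φ v = c} * Fintype.card K = Fintype.card V := by
  have hsurj := LinearMap.surjective_of_ne_zero hφ
  have hfib : ∀ c', #{v | φ v = c'} = #{v | φ v = c} := fun c' =>
    AddMonoidHom.card_fiber_eq_of_mem_range φ.toAddMonoidHom (hsurj c') (hsurj c)
  calc #{v | φ v = c} * Fintype.card K = ∑ c' : K, #{v | φ v = c'} := by
        simp [hfib, mul_comm]
    _ = Fintype.card V := (card_eq_sum_card_fiberwise fun _ _ => mem_univ _).symm

def affineHyperplane (B : LinearMap.BilinForm K V) (lam : K) (r : K × V) : Finset (K × V) :=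
  {p | p.1 + r.1 + lam = B p.2 r.2}

variable [DecidableEq V] (B : LinearMap.BilinForm K V) (lam : K)

theorem card_affineHyperplane_inter (r r' : K × V) :
    #(affineHyperplane B lam r ∩ affineHyperplane B lam r')
      = #{v | B v (r.2 - r'.2) = r.1 - r'.1} := by
  rw [← card_filter_fst_eq_and_s10 (fun v => B v r.2 - r.1 - lam)]
  congr 1
  ext p
  simp only [affineHyperplane, mem_inter, mem_filter, mem_univ, true_and, map_sub]
  constructor
  · rintro ⟨h, h'⟩
    exact ⟨by linear_combination h, by linear_combination h' - h⟩
  · rintro ⟨h, h'⟩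
    exact ⟨by linear_combination h, by linear_combination h + h'⟩

theorem card_affineHyperplane (r : K × V) : #(affineHyperplane B lam r) = Fintype.card V := by
  simpa using card_affineHyperplane_inter B lam r r

theorem card_affineHyperplane_inter_mul_le (hB : B.SeparatingRight) {r r' : K × V} (h : r ≠ r') :
    #(affineHyperplane B lam r ∩ affineHyperplane B lam r') * Fintype.card K ≤ Fintype.card V := by
  rw [card_affineHyperplane_inter]
  by_cases h2 : r.2 = r'.2
  · have h1 : r.1 - r'.1 ≠ 0 := sub_ne_zero.2 fun h1 => h (Prod.ext h1 h2)
    simp [h2, h1.symm]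
  · have hφ : B.flip (r.2 - r'.2) ≠ 0 := fun h0 =>
      sub_ne_zero.2 h2 (hB _ fun x => by simpa using LinearMap.congr_fun h0 x)
    exact (LinearMap.card_fiber_mul_card_eq _ hφ _).le

theorem card_mul_card_le_of_forall_disjoint_affineHyperplane (hB : B.SeparatingRight)
    {E S : Finset (K × V)} (hE : ∀ r ∈ S, Disjoint E (affineHyperplane B lam r)) :
    #E * #S ≤ Fintype.card K ^ 2 * Fintype.card V := by
  have hinter : ∀ r ∈ S, ∀ r' ∈ S, r ≠ r' → Fintype.card (K × V) *
      #(affineHyperplane B lam r ∩ affineHyperplane B lam r') ≤ Fintype.card V ^ 2 :=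
    fun r _ r' _ h => calc
      _ = #(affineHyperplane B lam r ∩ affineHyperplane B lam r') * Fintype.card K *
          Fintype.card V := by rw [Fintype.card_prod]; ring
      _ ≤ Fintype.card V * Fintype.card V :=
          Nat.mul_le_mul_right _ (card_affineHyperplane_inter_mul_le B lam hB h)
      _ = Fintype.card V ^ 2 := (sq _).symm
  have hbound := card_mul_le_sq_of_forall_disjoint (fun r _ => card_affineHyperplane B lam r)
    hinter hE
  rw [Fintype.card_prod] at hbound
  refine Nat.le_of_mul_le_mul_right ?_ (Fintype.card_pos (α := V))
  calc #E * #S * Fintype.card V = #E * (#S * Fintype.card V) := mul_assoc _ _ _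
    _ ≤ #E * (Fintype.card K * Fintype.card V + #S * Fintype.card V) :=
        Nat.mul_le_mul_left _ (Nat.le_add_left _ _)
    _ ≤ (Fintype.card K * Fintype.card V) ^ 2 := hbound
    _ = Fintype.card K ^ 2 * Fintype.card V * Fintype.card V := by ring

end Hyperplanes

theorem stmt10_general (F : Type) [Field F] [Fintype F] [DecidableEq F]
    (d : ℕ)
    (B : LinearMap.BilinForm F (Fin d → F))
    (hB : B.Nondegenerate)
    (lam : F)
    (E F' : Finset (F × (Fin d → F)))
    (hEF : 2 * (Fintype.card F : ℝ) ^ (d + 2) ≤ (E.card : ℝ) * F'.card) :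
    ∃ p ∈ E, ∃ r ∈ F', p.1 + r.1 + lam = B p.2 r.2 := by
  by_contra! hcon
  have hdisj : ∀ r ∈ F', Disjoint E (affineHyperplane B lam r) := fun r hr =>
    disjoint_left.2 fun p hp hp' => hcon p hp r hr (by simpa [affineHyperplane] using hp')
  have hbound := card_mul_card_le_of_forall_disjoint_affineHyperplane B lam hB.2 hdisj
  rw [Fintype.card_fun, Fintype.card_fin, ← pow_add, add_comm] at hbound
  have hq : (0 : ℝ) < Fintype.card F ^ (d + 2) := by positivity
  have : (E.card : ℝ) * F'.card ≤ Fintype.card F ^ (d + 2) := by exact_mod_cast hbound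
  linarith

theorem stmt10 (F : Type) [Field F] [Fintype F] [DecidableEq F]
    (hodd : Odd (Fintype.card F))
    (d : ℕ) (hd : 1 ≤ d)
    (B : LinearMap.BilinForm F (Fin d → F))
    (hB : B.Nondegenerate)
    (lam : F)
    (E F' : Finset (F × (Fin d → F)))
    (hEF : 2 * (Fintype.card F : ℝ) ^ (d + 2) ≤ (E.card : ℝ) * F'.card) :
    ∃ p ∈ E, ∃ r ∈ F', p.1 + r.1 + lam = B p.2 r.2 :=
  stmt10_general F d B hB lam E F' hEF
end

section
/- For any subset A of a finite field F_q with q elements and any d ≥ 2, writing A·A = {aa' : a, a' ∈ A} and dA = {a₁ + ... + a_d : aᵢ ∈ A}, one has |A|^{2d-1} ≤ |A|^d |A·A|^{d-1} |dA| / q + √(q^d |A|^d |A·A|^{d-1} |dA|). -/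
/-!
Let `N` count the tuples `(aᵢ, pᵢ)_{i < d-1} ∈ (A × A·A)^{d-1}` and `c ∈ A` with
`∑ pᵢ / aᵢ + c ∈ dA`. Every choice of `aᵢ, bᵢ, c ∈ A` yields such a tuple with `pᵢ = aᵢ bᵢ`,
so `N ≥ |A|^{2d-1}`. Detecting the condition with a nontrivial additive character `ψ` gives
`q N = ∑_t K(t)^{d-1} Â(t) conj(Ŝ(t))`, where `K(t) = ∑_{a, p} ψ(t p / a)`. The term `t = 0` is
`|A|^d |A·A|^{d-1} |dA|`; for `t ≠ 0`, Cauchy–Schwarz and Parseval give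
`|K(t)| ≤ √(q |A| |A·A|)` and `∑_t |Â(t)| |Ŝ(t)| ≤ q √(|A| |dA|)`.
-/
open Finset ComplexConjugate
open scoped Pointwise

namespace AddChar

theorem map_sum_eq_prod {A M ι : Type*} [AddCommMonoid A] [CommMonoid M] (ψ : AddChar A M)
    (s : Finset ι) (f : ι → A) : ψ (∑ i ∈ s, f i) = ∏ i ∈ s, ψ (f i) := by
  classical
  induction s using Finset.induction_on with
  | empty => simp
  | insert a s ha ih => rw [sum_insert ha, prod_insert ha, map_add_eq_mul, ih]

theorem sum_piFinset_apply_mul_sum {R M X ι : Type*} [CommRing R] [CommSemiring M] [Fintype ι]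
    [DecidableEq ι] (ψ : AddChar R M) (U : Finset X) (f : X → R) (t : R) :
    ∑ v ∈ Fintype.piFinset (fun _ : ι => U), ψ (t * ∑ i, f (v i)) =
      (∑ x ∈ U, ψ (t * f x)) ^ Fintype.card ι := by
  rw [← card_univ, ← prod_const, prod_univ_sum]
  simp_rw [mul_sum, map_sum_eq_prod]

section CommRing

variable {R : Type*} [CommRing R] [Fintype R] [DecidableEq R] {ψ : AddChar R ℂ}

theorem card_filter_eq_zero_mul_card (hψ : ψ.IsPrimitive) {X : Type*} (Y : Finset X)
    (g : X → R) : (#{y ∈ Y | g y = 0} : ℂ) * Fintype.card R = ∑ t, ∑ y ∈ Y, ψ (t * g y) := by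
  rw [sum_comm]
  simp only [sum_mulShift _ hψ]
  push_cast
  rw [← sum_filter, sum_const, nsmul_eq_mul]

theorem card_filter_mem_mul_card (hψ : ψ.IsPrimitive) {X : Type*} (Y : Finset X) (g : X → R)
    (S : Finset R) :
    (#{y ∈ Y | g y ∈ S} : ℂ) * Fintype.card R =
      ∑ t, (∑ y ∈ Y, ψ (t * g y)) * conj (∑ s ∈ S, ψ (t * s)) := by
  have hcard : #{y ∈ Y | g y ∈ S} = #{p ∈ Y ×ˢ S | g p.1 - p.2 = 0} := by
    simp_rw [card_filter, sum_product, sub_eq_zero, sum_ite_eq]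
  rw [hcard, card_filter_eq_zero_mul_card hψ]
  refine sum_congr rfl fun t _ => ?_
  simp_rw [map_sum, ← map_neg_eq_conj, sum_mul_sum, ← map_add_eq_mul, sum_product, mul_sub,
    sub_eq_add_neg]

theorem sum_norm_sum_apply_mul_sq (hψ : ψ.IsPrimitive) (B : Finset R) :
    ∑ t, ‖∑ b ∈ B, ψ (t * b)‖ ^ 2 = Fintype.card R * #B := by
  have h := card_filter_mem_mul_card hψ B id B
  simp_rw [id, filter_mem_eq_inter, inter_self, Complex.mul_conj'] at h
  exact_mod_cast h.symm.trans (mul_comm _ _)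

theorem sum_norm_mul_norm_le (hψ : ψ.IsPrimitive) (A S : Finset R) :
    ∑ t, ‖∑ a ∈ A, ψ (t * a)‖ * ‖∑ s ∈ S, ψ (t * s)‖ ≤ Fintype.card R * √(#A * #S) := by
  refine (Real.sum_mul_le_sqrt_mul_sqrt _ _ _).trans_eq ?_
  rw [sum_norm_sum_apply_mul_sq hψ, sum_norm_sum_apply_mul_sq hψ, ← Real.sqrt_mul (by positivity),
    show (Fintype.card R : ℝ) * #A * (Fintype.card R * #S) = Fintype.card R ^ 2 * (#A * #S) by ring,
    Real.sqrt_mul (by positivity), Real.sqrt_sq (by positivity)]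

end CommRing

section Field

variable {F : Type*} [Field F] [Fintype F] [DecidableEq F] {ψ : AddChar F ℂ}

omit [DecidableEq F] in
theorem exists_isPrimitive : ∃ ψ : AddChar F ℂ, ψ.IsPrimitive := by
  obtain ⟨ψ, hψ⟩ := exists_apply_ne_zero.2 (one_ne_zero (α := F))
  exact ⟨ψ, IsPrimitive.of_ne_one fun h => hψ (by rw [h, one_apply])⟩

theorem norm_sum_apply_mul_div_le (hψ : ψ.IsPrimitive) (A P : Finset F) {t : F} (ht : t ≠ 0) :
    ‖∑ x ∈ A ×ˢ P, ψ (t * (x.2 / x.1))‖ ≤ √(#A * (Fintype.card F * #P)) := by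
  set G : F → ℝ := fun y => ‖∑ p ∈ P, ψ (y * p)‖
  have hinj : Set.InjOn (t / ·) A := fun a _ b _ h =>
    inv_injective (mul_left_cancel₀ ht (by simpa only [div_eq_mul_inv] using h))
  calc ‖∑ x ∈ A ×ˢ P, ψ (t * (x.2 / x.1))‖ = ‖∑ a ∈ A, ∑ p ∈ P, ψ (t / a * p)‖ := by
        rw [sum_product]; congr! 4; dsimp only; ring
    _ ≤ ∑ a ∈ A, 1 * G (t / a) := by simpa [G] using norm_sum_le _ _
    _ ≤ √(∑ a ∈ A, 1 ^ 2) * √(∑ a ∈ A, G (t / a) ^ 2) := Real.sum_mul_le_sqrt_mul_sqrt _ _ _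
    _ ≤ √(#A : ℝ) * √(∑ y, G y ^ 2) := by
        gcongr
        · simp
        · calc ∑ a ∈ A, G (t / a) ^ 2 = ∑ y ∈ A.image (t / ·), G y ^ 2 :=
                (sum_image (f := fun y => G y ^ 2) hinj).symm
            _ ≤ ∑ y, G y ^ 2 := sum_le_univ_sum_of_nonneg fun y => sq_nonneg _
    _ = √(#A * (Fintype.card F * #P)) := by
        rw [sum_norm_sum_apply_mul_sq hψ, ← Real.sqrt_mul (Nat.cast_nonneg _)]

end Field

end AddChar

section RatioSums

variable {F : Type*} [Field F] [DecidableEq F]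

def ratioSumCount (e : ℕ) (A P S : Finset F) : ℕ :=
  #{y ∈ Fintype.piFinset (fun _ : Fin e => A ×ˢ P) ×ˢ A | ∑ i, (y.1 i).2 / (y.1 i).1 + y.2 ∈ S}

theorem ratioSumCount_mul_card_eq [Fintype F] {ψ : AddChar F ℂ} (hψ : ψ.IsPrimitive) (e : ℕ)
    (A P S : Finset F) :
    (ratioSumCount e A P S : ℂ) * Fintype.card F =
      ∑ t, (∑ x ∈ A ×ˢ P, ψ (t * (x.2 / x.1))) ^ e * (∑ a ∈ A, ψ (t * a)) *
        conj (∑ s ∈ S, ψ (t * s)) := by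
  rw [ratioSumCount, AddChar.card_filter_mem_mul_card hψ]
  refine sum_congr rfl fun t _ => ?_
  rw [sum_product]
  dsimp only
  simp_rw [mul_add, AddChar.map_add_eq_mul, ← sum_mul_sum]
  rw [AddChar.sum_piFinset_apply_mul_sum (f := fun x : F × F => x.2 / x.1), Fintype.card_fin]

theorem norm_sum_erase_zero_le [Fintype F] {ψ : AddChar F ℂ} (hψ : ψ.IsPrimitive) (e : ℕ)
    (A P S : Finset F) :
    ‖∑ t ∈ univ.erase 0, (∑ x ∈ A ×ˢ P, ψ (t * (x.2 / x.1))) ^ e * (∑ a ∈ A, ψ (t * a)) *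
        conj (∑ s ∈ S, ψ (t * s))‖ ≤
      Fintype.card F * √(Fintype.card F ^ e * #A ^ (e + 1) * #P ^ e * #S) := by
  set q : ℕ := Fintype.card F
  let χ : Finset F → F → ℂ := fun B t => ∑ b ∈ B, ψ (t * b)
  have hroot : √(q ^ e * #A ^ (e + 1) * #P ^ e * #S) = √(#A * (q * #P)) ^ e * √(#A * #S) := by
    rw [Real.sqrt_eq_iff_eq_sq (by positivity) (by positivity), mul_pow, ← pow_mul, mul_comm e 2,
      pow_mul, Real.sq_sqrt (by positivity), Real.sq_sqrt (by positivity)]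
    ring
  calc _ ≤ ∑ t ∈ univ.erase 0, √(#A * (q * #P)) ^ e * (‖χ A t‖ * ‖χ S t‖) := by
        refine (norm_sum_le _ _).trans (sum_le_sum fun t ht => ?_)
        rw [norm_mul, norm_mul, norm_pow, Complex.norm_conj, mul_assoc]
        gcongr
        exact AddChar.norm_sum_apply_mul_div_le hψ A P (ne_of_mem_erase ht)
    _ ≤ √(#A * (q * #P)) ^ e * ∑ t, ‖χ A t‖ * ‖χ S t‖ := by
        rw [← mul_sum]
        gcongr
        exact subset_univ _
    _ ≤ √(#A * (q * #P)) ^ e * (q * √(#A * #S)) := by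
        gcongr
        exact AddChar.sum_norm_mul_norm_le hψ A S
    _ = q * √(q ^ e * #A ^ (e + 1) * #P ^ e * #S) := by
        rw [hroot]
        ring

theorem ratioSumCount_mul_card_le [Fintype F] (e : ℕ) (A P S : Finset F) :
    (ratioSumCount e A P S : ℝ) * Fintype.card F ≤
      #A ^ (e + 1) * #P ^ e * #S +
        Fintype.card F * √(Fintype.card F ^ e * #A ^ (e + 1) * #P ^ e * #S) := by
  obtain ⟨ψ, hψ⟩ := AddChar.exists_isPrimitive (F := F)
  set E := ∑ t ∈ univ.erase 0, (∑ x ∈ A ×ˢ P, ψ (t * (x.2 / x.1))) ^ e *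
    (∑ a ∈ A, ψ (t * a)) * conj (∑ s ∈ S, ψ (t * s))
  have hsplit : (((ratioSumCount e A P S : ℝ) * Fintype.card F : ℝ) : ℂ) =
      ((#A ^ (e + 1) * #P ^ e * #S : ℝ) : ℂ) + E := by
    push_cast
    rw [ratioSumCount_mul_card_eq hψ, ← add_sum_erase _ _ (mem_univ 0)]
    simp only [zero_mul, AddChar.map_zero_eq_one, sum_const, nsmul_one, card_product, map_natCast]
    push_cast
    ring
  have hre := congrArg Complex.re hsplit
  simp only [Complex.ofReal_re, Complex.add_re] at hre
  linarith [Complex.re_le_norm E, norm_sum_erase_zero_le hψ e A P S]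

theorem exists_mapsTo_mul_mul_injOn (A : Finset F) :
    ∃ c : F, Set.MapsTo (c * ·) A ↑(A * A) ∧ Set.InjOn (c * ·) A := by
  by_cases h : ∃ a ∈ A, a ≠ 0
  · obtain ⟨a, ha, ha0⟩ := h
    exact ⟨a, fun b hb => mul_mem_mul ha hb, (mul_right_injective₀ ha0).injOn⟩
  · push Not at h
    refine ⟨0, fun b hb => ?_, fun b hb b' hb' _ => (h b hb).trans (h b' hb').symm⟩
    simpa [h b hb] using mem_coe.2 (mul_mem_mul hb hb)

theorem exists_injOn_mem_product_div_mem {A P : Finset F} (hP : A * A ⊆ P) :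
    ∃ φ : F × F → F × F, Set.InjOn φ ↑(A ×ˢ A) ∧
      ∀ x ∈ A ×ˢ A, φ x ∈ A ×ˢ P ∧ (φ x).2 / (φ x).1 ∈ A := by
  obtain ⟨c₀, hc₀A, hc₀inj⟩ := exists_mapsTo_mul_mul_injOn A
  -- `(a, b) ↦ (a, a b)`, except that where `a = 0` the ratio `p / 0 = 0` forgets `p`,
  -- so `c₀ b` is used there to keep the map injective
  refine ⟨fun x => (x.1, (if x.1 = 0 then c₀ else x.1) * x.2), ?_, ?_⟩
  · rintro ⟨a, b⟩ hx ⟨a', b'⟩ hx' h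
    simp only [Prod.mk.injEq] at h
    obtain ⟨rfl, h⟩ := h
    by_cases ha : a = 0
    · simp only [ha, if_true] at h
      exact Prod.ext rfl (hc₀inj (mem_product.1 hx).2 (mem_product.1 hx').2 h)
    · simp only [ha, if_false] at h
      exact Prod.ext rfl (mul_left_cancel₀ ha h)
  · rintro ⟨a, b⟩ hx
    rw [mem_product] at hx
    by_cases ha : a = 0
    · subst ha
      simpa [hx.1] using hP (hc₀A hx.2)
    · simpa [ha, hx.1, hx.2, mul_div_cancel_left₀] using hP (mul_mem_mul hx.1 hx.2)

theorem pow_card_le_ratioSumCount (e : ℕ) {A P S : Finset F} (hP : A * A ⊆ P)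
    (hS : ∀ v : Fin e → F, ∀ c, (∀ i, v i ∈ A) → c ∈ A → ∑ i, v i + c ∈ S) :
    #A ^ (2 * e + 1) ≤ ratioSumCount e A P S := by
  obtain ⟨φ, hφinj, hφ⟩ := exists_injOn_mem_product_div_mem hP
  calc #A ^ (2 * e + 1) = #(Fintype.piFinset (fun _ : Fin e => A ×ˢ A) ×ˢ A) := by
        rw [card_product, Fintype.card_piFinset_const, card_product]
        ring
    _ ≤ ratioSumCount e A P S := by
        refine card_le_card_of_injOn (fun y => (φ ∘ y.1, y.2)) ?_ ?_
        · rintro ⟨v, c⟩ h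
          simp only [coe_product, Set.mem_prod, mem_coe, Fintype.mem_piFinset] at h
          simp only [coe_filter, Set.mem_ofPred_eq, mem_product,
            Fintype.mem_piFinset, Function.comp_apply]
          exact ⟨⟨fun i => mem_product.1 (hφ _ (h.1 i)).1, h.2⟩,
            hS _ c (fun i => (hφ _ (h.1 i)).2) h.2⟩
        · rintro ⟨v, c⟩ h ⟨v', c'⟩ h' heq
          simp only [coe_product, Set.mem_prod, mem_coe, Fintype.mem_piFinset] at h h'
          simp only [Prod.mk.injEq] at heq
          refine Prod.ext (funext fun i => hφinj (h.1 i) (h'.1 i) ?_) heq.2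
          exact congrFun heq.1 i

theorem pow_card_le_of_mul_subset [Fintype F] (e : ℕ) {A P S : Finset F} (hP : A * A ⊆ P)
    (hS : ∀ v : Fin e → F, ∀ c, (∀ i, v i ∈ A) → c ∈ A → ∑ i, v i + c ∈ S) :
    (#A : ℝ) ^ (2 * e + 1) ≤ #A ^ (e + 1) * #P ^ e * #S / Fintype.card F +
      √(Fintype.card F ^ e * #A ^ (e + 1) * #P ^ e * #S) := by
  have hq : (0 : ℝ) < Fintype.card F := by exact_mod_cast Fintype.card_pos
  calc (#A : ℝ) ^ (2 * e + 1) ≤ ratioSumCount e A P S := by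
        exact_mod_cast pow_card_le_ratioSumCount e hP hS
    _ ≤ (#A ^ (e + 1) * #P ^ e * #S +
          Fintype.card F * √(Fintype.card F ^ e * #A ^ (e + 1) * #P ^ e * #S)) /
            Fintype.card F := by
        rw [le_div_iff₀ hq]
        exact ratioSumCount_mul_card_le e A P S
    _ = _ := by rw [add_div, mul_div_cancel_left₀ _ hq.ne']

end RatioSums

theorem sum_add_mem_image_sum_piFinset {α : Type*} [AddCommMonoid α] [DecidableEq α]
    {A : Finset α} {e : ℕ} {v : Fin e → α} {c : α} (hv : ∀ i, v i ∈ A) (hc : c ∈ A) :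
    ∑ i, v i + c ∈ (Fintype.piFinset fun _ : Fin (e + 1) => A).image (fun f => ∑ i, f i) :=
  mem_image.2 ⟨Fin.snoc v c, Fintype.mem_piFinset.2 (Fin.lastCases (by simpa) (by simpa)),
    by simp [Fin.sum_univ_castSucc]⟩

theorem stmt11_general (F : Type) [Field F] [Fintype F] [DecidableEq F]
    (d : ℕ) (hd : 2 ≤ d)
    (A : Finset F) :
    ((A.card : ℝ)) ^ (2 * d - 1)
      ≤ (A.card : ℝ) ^ d
          * (((A ×ˢ A).image (fun p => p.1 * p.2)).card : ℝ) ^ (d - 1)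
          * (((Fintype.piFinset (fun _ : Fin d => A)).image
                (fun f => ∑ i, f i)).card : ℝ)
          / Fintype.card F
        + Real.sqrt ((Fintype.card F : ℝ) ^ d * (A.card : ℝ) ^ d
            * (((A ×ˢ A).image (fun p => p.1 * p.2)).card : ℝ) ^ (d - 1)
            * (((Fintype.piFinset (fun _ : Fin d => A)).image
                  (fun f => ∑ i, f i)).card : ℝ)) := by
  obtain ⟨e, rfl⟩ : ∃ e, d = e + 1 := ⟨d - 1, by omega⟩
  rw [show 2 * (e + 1) - 1 = 2 * e + 1 by omega, Nat.add_sub_cancel, image_mul_product]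
  refine (pow_card_le_of_mul_subset e subset_rfl
    fun v c hv hc => sum_add_mem_image_sum_piFinset hv hc).trans ?_
  have hq : (1 : ℝ) ≤ Fintype.card F := by exact_mod_cast Fintype.card_pos
  gcongr
  omega

theorem stmt11 (F : Type) [Field F] [Fintype F] [DecidableEq F]
    (hodd : Odd (Fintype.card F))
    (d : ℕ) (hd : 2 ≤ d)
    (A : Finset F) :
    ((A.card : ℝ)) ^ (2 * d - 1)
      ≤ (A.card : ℝ) ^ d
          * (((A ×ˢ A).image (fun p => p.1 * p.2)).card : ℝ) ^ (d - 1)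
          * (((Fintype.piFinset (fun _ : Fin d => A)).image
                (fun f => ∑ i, f i)).card : ℝ)
          / Fintype.card F
        + Real.sqrt ((Fintype.card F : ℝ) ^ d * (A.card : ℝ) ^ d
            * (((A ×ˢ A).image (fun p => p.1 * p.2)).card : ℝ) ^ (d - 1)
            * (((Fintype.piFinset (fun _ : Fin d => A)).image
                  (fun f => ∑ i, f i)).card : ℝ)) :=
  stmt11_general F d hd A
end

section
/- For any A ⊆ F_q, |A|³ ≤ |A·A| |A|² |A+A| / q + √(q |A·A| |A|² |A+A|); consequently |A+A| · |A·A| ≫ min( q|A|, |A|⁴/q ). -/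
/-!
Count incidences between the points `(A + A) × (A · A)` and the lines `y = (x - b) c` with
`b ∈ A`, `c ∈ A \ {0}`: each such line contains the `|A|` points `(a + b, a c)`, `a ∈ A`.
Two of these lines with different slopes meet exactly once and parallel ones never, so the
number `r(p)` of lines through a point of `F²` has mean `μ = |A| |A \ {0}| / q` and
`∑ (r(p) - μ)² = |A| |A \ {0}| (q - |A|)`. Cauchy–Schwarz over the point set then bounds the
incidences by `|A + A| |A · A| μ + √(|A + A| |A · A| |A| |A \ {0}| (q - |A|))`.
When `|A|² ≥ q` this rearranges to the claimed inequality: the slope `0`, for which all these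
lines coincide, had to be discarded, and `|A \ {0}| ≥ |A| - 1` is exactly what this case can
afford. When `|A|² ≤ q` the inequality already follows from `|A + A|, |A · A| ≥ |A|`.
The second claim comes from whichever of the two terms on the right dominates.
-/

open Finset

lemma sum_sum_ite_snd_eq {α β : Type*} [DecidableEq β] (B : Finset α) (C : Finset β) :
    ∑ l ∈ B ×ˢ C, ∑ l' ∈ B ×ˢ C, (if l.2 = l'.2 then 1 else 0 : ℝ) = #B ^ 2 * #C := by
  have inner : ∀ l ∈ B ×ˢ C, ∑ l' ∈ B ×ˢ C, (if l.2 = l'.2 then 1 else 0 : ℝ) = #B := by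
    intro l hl
    simp only [sum_product, sum_ite_eq, (mem_product.1 hl).2, if_true, sum_const, nsmul_one]
  rw [sum_congr rfl inner, sum_const, card_product, nsmul_eq_mul]
  push_cast
  ring

lemma card_le_card_image_add {G : Type*} [Add G] [IsLeftCancelAdd G] [DecidableEq G]
    (A : Finset G) : #A ≤ #((A ×ˢ A).image fun p => p.1 + p.2) := by
  rcases A.eq_empty_or_nonempty with rfl | ⟨a, ha⟩
  · simp
  calc #A = #(A.image (a + ·)) := (card_image_of_injective _ (add_right_injective a)).symm
    _ ≤ _ := card_le_card <| image_subset_iff.2 fun b hb =>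
      mem_image_of_mem (fun p : G × G => p.1 + p.2) (mk_mem_product ha hb)

lemma card_le_card_image_mul {M : Type*} [Mul M] [Zero M] [IsLeftCancelMulZero M] [DecidableEq M]
    (A : Finset M) : #A ≤ #((A ×ˢ A).image fun p => p.1 * p.2) := by
  by_cases h : ∃ a ∈ A, a ≠ 0
  · obtain ⟨a, ha, ha0⟩ := h
    calc #A = #(A.image (a * ·)) := (card_image_of_injective _ (mul_right_injective₀ ha0)).symm
      _ ≤ _ := card_le_card <| image_subset_iff.2 fun b hb =>
        mem_image_of_mem (fun p : M × M => p.1 * p.2) (mk_mem_product ha hb)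
  · push Not at h
    rcases A.eq_empty_or_nonempty with rfl | hA
    · simp
    calc #A ≤ 1 := card_le_one.2 fun a ha b hb => (h a ha).trans (h b hb).symm
      _ ≤ _ := card_pos.2 ((hA.product hA).image _)

section Incidence

variable {F : Type*} [Field F] [Fintype F] [DecidableEq F]

/-- The pair `(b, c)` encodes the line `y = (x - b) * c` of slope `c`. -/
def line (l : F × F) : Finset (F × F) := {p | (p.1 - l.1) * l.2 = p.2}

@[simp]
lemma mem_line {l p : F × F} : p ∈ line l ↔ (p.1 - l.1) * l.2 = p.2 := by simp [line]

lemma card_line (l : F × F) : #(line l) = Fintype.card F := by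
  rw [line, card_filter, Fintype.sum_prod_type]
  simp

lemma card_line_inter_line (l l' : F × F) (hc : l.2 ≠ 0) :
    #(line l ∩ line l') = if l.2 = l'.2 then if l.1 = l'.1 then Fintype.card F else 0 else 1 := by
  obtain ⟨b, c⟩ := l
  obtain ⟨b', c'⟩ := l'
  have hx : #(line (b, c) ∩ line (b', c')) = #{x : F | (x - b) * c = (x - b') * c'} := by
    rw [line, line, ← filter_and, card_filter, card_filter, Fintype.sum_prod_type]
    refine sum_congr rfl fun x _ => ?_
    by_cases h : (x - b) * c = (x - b') * c'
    · simp [h]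
    · rw [if_neg h]
      exact sum_eq_zero fun y _ => if_neg fun hy => h (hy.1.trans hy.2.symm)
  rw [hx]
  dsimp only at hc ⊢
  split_ifs with hcc hbb
  · subst hcc hbb
    simp
  · subst hcc
    simp [mul_left_inj' hc, hbb]
  · rw [card_eq_one]
    refine ⟨(b * c - b' * c') / (c - c'), ?_⟩
    ext x
    simp only [mem_filter, mem_univ, true_and, mem_singleton]
    rw [eq_div_iff (sub_ne_zero.2 hcc)]
    constructor <;> intro h <;> linear_combination h

def lineCount (L : Finset (F × F)) (p : F × F) : ℕ := #{l ∈ L | p ∈ line l}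

lemma sum_lineCount (L : Finset (F × F)) : ∑ p, lineCount L p = #L * Fintype.card F := by
  calc ∑ p, lineCount L p = ∑ l ∈ L, #{p | p ∈ line l} :=
        sum_card_bipartiteAbove_eq_sum_card_bipartiteBelow _
    _ = #L * Fintype.card F := by
        simp only [filter_mem_eq_inter, univ_inter, card_line, sum_const, smul_eq_mul]

lemma sum_lineCount_sq (L : Finset (F × F)) :
    ∑ p, lineCount L p ^ 2 = ∑ l ∈ L, ∑ l' ∈ L, #(line l ∩ line l') := by
  simp only [lineCount, sq, card_filter, sum_mul_sum, ite_zero_mul_ite_zero, mul_one]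
  rw [sum_comm]
  refine sum_congr rfl fun l _ => ?_
  rw [sum_comm]
  refine sum_congr rfl fun l' _ => ?_
  rw [← card_filter, filter_and, filter_mem_eq_inter, filter_mem_eq_inter, univ_inter, univ_inter]

lemma sum_lineCount_product_sq (B C : Finset F) (hC : 0 ∉ C) :
    ∑ p, (lineCount (B ×ˢ C) p : ℝ) ^ 2
      = (#B * #C) ^ 2 - #B ^ 2 * #C + Fintype.card F * (#B * #C) := by
  have key : ∀ l ∈ B ×ˢ C, ∀ l' ∈ B ×ˢ C, (#(line l ∩ line l') : ℝ)
      = 1 - (if l.2 = l'.2 then 1 else 0) + Fintype.card F * (if l = l' then 1 else 0) := by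
    intro l hl l' _
    rw [card_line_inter_line l l' (ne_of_mem_of_not_mem (mem_product.1 hl).2 hC)]
    by_cases h2 : l.2 = l'.2 <;> by_cases h1 : l.1 = l'.1 <;> simp [h1, h2, Prod.ext_iff]
  have hdiag : ∑ l ∈ B ×ˢ C, ∑ l' ∈ B ×ˢ C, (if l = l' then 1 else 0 : ℝ) = #(B ×ˢ C) := by
    rw [sum_congr rfl fun l hl => by rw [sum_ite_eq, if_pos hl]]
    simp
  have h := congrArg (Nat.cast : ℕ → ℝ) (sum_lineCount_sq (B ×ˢ C))
  push_cast at h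
  rw [h, sum_congr rfl fun l hl => sum_congr rfl (key l hl)]
  simp only [sum_add_distrib, sum_sub_distrib, ← mul_sum, sum_sum_ite_snd_eq, hdiag, sum_const,
    card_product, nsmul_eq_mul]
  push_cast
  ring

lemma sum_lineCount_product_sub_sq (B C : Finset F) (hC : 0 ∉ C) :
    ∑ p, ((lineCount (B ×ˢ C) p : ℝ) - #B * #C / Fintype.card F) ^ 2
      = #B * #C * (Fintype.card F - #B) := by
  have hsum : ∑ p, (lineCount (B ×ˢ C) p : ℝ) = #B * #C * Fintype.card F := by
    exact_mod_cast (sum_lineCount (B ×ˢ C)).trans (by rw [card_product])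
  have hq : (Fintype.card F : ℝ) ≠ 0 := by positivity
  simp only [sub_sq, sum_add_distrib, sum_sub_distrib, ← sum_mul, ← mul_sum, sum_const, card_univ,
    Fintype.card_prod, nsmul_eq_mul, sum_lineCount_product_sq B C hC, hsum]
  push_cast
  field_simp
  ring

lemma sum_lineCount_product_le (B C : Finset F) (hC : 0 ∉ C) (T : Finset (F × F)) :
    ∑ p ∈ T, (lineCount (B ×ˢ C) p : ℝ)
      ≤ #T * (#B * #C) / Fintype.card F + √(#T * (#B * #C * (Fintype.card F - #B))) := by
  set μ : ℝ := #B * #C / Fintype.card F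
  have hdev : ∑ p ∈ T, ((lineCount (B ×ˢ C) p : ℝ) - μ)
      ≤ √(#T * (#B * #C * (Fintype.card F - #B))) := by
    apply Real.le_sqrt_of_sq_le
    calc (∑ p ∈ T, ((lineCount (B ×ˢ C) p : ℝ) - μ)) ^ 2
        ≤ #T * ∑ p ∈ T, ((lineCount (B ×ˢ C) p : ℝ) - μ) ^ 2 := sq_sum_le_card_mul_sum_sq
      _ ≤ #T * ∑ p, ((lineCount (B ×ˢ C) p : ℝ) - μ) ^ 2 :=
        mul_le_mul_of_nonneg_left
          (sum_le_sum_of_subset_of_nonneg (subset_univ T) fun _ _ _ => sq_nonneg _) (by positivity)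
      _ = #T * (#B * #C * (Fintype.card F - #B)) := by rw [sum_lineCount_product_sub_sq B C hC]
  calc ∑ p ∈ T, (lineCount (B ×ˢ C) p : ℝ)
      = #T * μ + ∑ p ∈ T, ((lineCount (B ×ˢ C) p : ℝ) - μ) := by
        rw [sum_sub_distrib, sum_const, nsmul_eq_mul]
        ring
    _ ≤ #T * (#B * #C) / Fintype.card F + √(#T * (#B * #C * (Fintype.card F - #B))) := by
        rw [mul_div_assoc]
        gcongr

lemma card_mul_card_le_sum_lineCount (A : Finset F) (L : Finset (F × F)) (hL : L ⊆ A ×ˢ A) :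
    #A * #L ≤ ∑ p ∈ ((A ×ˢ A).image fun p => p.1 + p.2) ×ˢ ((A ×ˢ A).image fun p => p.1 * p.2),
      lineCount L p := by
  set T := ((A ×ˢ A).image fun p => p.1 + p.2) ×ˢ ((A ×ˢ A).image fun p => p.1 * p.2)
  have hline : ∀ l ∈ L, #A ≤ #{p ∈ T | p ∈ line l} := by
    intro l hl
    obtain ⟨hb, hc⟩ := mem_product.1 (hL hl)
    have hinj : Function.Injective fun a => (a + l.1, a * l.2) :=
      fun a a' h => add_right_cancel (congrArg Prod.fst h)
    rw [← card_image_of_injective A hinj]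
    refine card_le_card fun p hp => ?_
    obtain ⟨a, ha, rfl⟩ := mem_image.1 hp
    refine mem_filter.2 ⟨mk_mem_product ?_ ?_, by simp⟩
    · exact mem_image_of_mem _ (mk_mem_product ha hb)
    · exact mem_image_of_mem _ (mk_mem_product ha hc)
  calc #A * #L = #L • #A := by rw [smul_eq_mul, mul_comm]
    _ ≤ ∑ l ∈ L, #{p ∈ T | p ∈ line l} := card_nsmul_le_sum _ _ _ hline
    _ = ∑ p ∈ T, lineCount L p := (sum_card_bipartiteAbove_eq_sum_card_bipartiteBelow _).symm

end Incidence

lemma cube_le_of_incidence_bound {q n m S P : ℝ} (hq : 1 < q) (hn : 0 ≤ n) (hm : n ≤ m + 1)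
    (hS : n ≤ S) (hP : n ≤ P)
    (h : n * (n * m) ≤ S * P * (n * m) / q + √(S * P * (n * m * (q - n)))) :
    n ^ 3 ≤ P * n ^ 2 * S / q + √(q * P * n ^ 2 * S) := by
  have hSP : n ^ 2 ≤ S * P := by nlinarith
  have hSP0 : 0 ≤ S * P := (sq_nonneg n).trans hSP
  have hsqrt : √(q * P * n ^ 2 * S) = n * √(q * (S * P)) := by
    rw [show q * P * n ^ 2 * S = n ^ 2 * (q * (S * P)) by ring, Real.sqrt_mul (sq_nonneg n),
      Real.sqrt_sq hn]
  rw [hsqrt]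
  rcases le_total (n ^ 2) q with hnq | hqn
  · have hsq : n ^ 2 ≤ √(q * (S * P)) := Real.le_sqrt_of_sq_le (by nlinarith)
    have : 0 ≤ P * n ^ 2 * S / q := by
      rw [show P * n ^ 2 * S = n ^ 2 * (S * P) by ring]; positivity
    nlinarith
  · have hm0 : 0 < m := by nlinarith
    have hdev : √(S * P * (n * m * (q - n))) ≤ m * √(q * (S * P)) := by
      calc √(S * P * (n * m * (q - n))) ≤ √(m ^ 2 * (q * (S * P))) := by
            refine Real.sqrt_le_sqrt ?_
            calc S * P * (n * m * (q - n)) = S * P * m * (n * (q - n)) := by ring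
              _ ≤ S * P * m * (m * q) := mul_le_mul_of_nonneg_left (by nlinarith) (by positivity)
              _ = m ^ 2 * (q * (S * P)) := by ring
        _ = m * √(q * (S * P)) := by rw [Real.sqrt_mul (sq_nonneg m), Real.sqrt_sq hm0.le]
    have hsq : n ^ 2 ≤ S * P * n / q + √(q * (S * P)) := by
      refine le_of_mul_le_mul_right ?_ hm0
      calc n ^ 2 * m = n * (n * m) := by ring
        _ ≤ S * P * (n * m) / q + m * √(q * (S * P)) := h.trans (by linarith)
        _ = (S * P * n / q + √(q * (S * P))) * m := by ring
    calc n ^ 3 = n * n ^ 2 := by ring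
      _ ≤ n * (S * P * n / q + √(q * (S * P))) := mul_le_mul_of_nonneg_left hsq hn
      _ = P * n ^ 2 * S / q + n * √(q * (S * P)) := by ring

lemma quarter_min_le_of_cube_le {q n S P : ℝ} (hq : 0 < q) (hn : 0 ≤ n) (hS : 0 ≤ S) (hP : 0 ≤ P)
    (h : n ^ 3 ≤ P * n ^ 2 * S / q + √(q * P * n ^ 2 * S)) :
    1 / 4 * min (q * n) (n ^ 4 / q) ≤ S * P := by
  have hSP := mul_nonneg hS hP
  rcases hn.eq_or_lt with rfl | hn
  · simp [hSP]
  have hn2 : 0 < n ^ 2 := by positivity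
  rcases le_total (√(q * P * n ^ 2 * S)) (P * n ^ 2 * S / q) with h1 | h1
  · have h2 : n ^ 3 * q ≤ 2 * (P * n ^ 2 * S) := by
      rw [← le_div_iff₀ hq, mul_div_assoc]
      linarith
    have : q * n ≤ 2 * (S * P) := by
      refine le_of_mul_le_mul_left ?_ hn2
      calc n ^ 2 * (q * n) = n ^ 3 * q := by ring
        _ ≤ 2 * (P * n ^ 2 * S) := h2
        _ = n ^ 2 * (2 * (S * P)) := by ring
    have := min_le_left (q * n) (n ^ 4 / q)
    linarith
  · have h2 : (n ^ 3) ^ 2 ≤ (2 * √(q * P * n ^ 2 * S)) ^ 2 :=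
      pow_le_pow_left₀ (by positivity) (by linarith) 2
    rw [mul_pow, Real.sq_sqrt (by positivity)] at h2
    have : n ^ 4 / q ≤ 4 * (S * P) := by
      rw [div_le_iff₀ hq]
      refine le_of_mul_le_mul_left ?_ hn2
      calc n ^ 2 * n ^ 4 = (n ^ 3) ^ 2 := by ring
        _ ≤ 2 ^ 2 * (q * P * n ^ 2 * S) := h2
        _ = n ^ 2 * (4 * (S * P) * q) := by ring
    have := min_le_right (q * n) (n ^ 4 / q)
    linarith

theorem card_pow_three_le {F : Type*} [Field F] [Fintype F] [DecidableEq F] (A : Finset F) :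
    (#A : ℝ) ^ 3
      ≤ #((A ×ˢ A).image fun p => p.1 * p.2) * (#A : ℝ) ^ 2 * #((A ×ˢ A).image fun p => p.1 + p.2)
          / Fintype.card F
        + √(Fintype.card F * #((A ×ˢ A).image fun p => p.1 * p.2) * (#A : ℝ) ^ 2
            * #((A ×ˢ A).image fun p => p.1 + p.2)) := by
  set S := (A ×ˢ A).image fun p => p.1 + p.2
  set P := (A ×ˢ A).image fun p => p.1 * p.2
  have hlow : (#A * #(A ×ˢ A.erase 0) : ℝ) ≤ ∑ p ∈ S ×ˢ P, (lineCount (A ×ˢ A.erase 0) p : ℝ) := by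
    exact_mod_cast card_mul_card_le_sum_lineCount A _ (product_subset_product_right (erase_subset 0 A))
  have hup := sum_lineCount_product_le A (A.erase 0) (notMem_erase 0 A) (S ×ˢ P)
  have hm : (#A : ℝ) ≤ #(A.erase 0) + 1 := by
    exact_mod_cast Nat.sub_le_iff_le_add.1 pred_card_le_card_erase
  rw [card_product] at hlow hup
  push_cast at hlow hup
  refine cube_le_of_incidence_bound (by exact_mod_cast Fintype.one_lt_card) (by positivity) hm
    (by exact_mod_cast card_le_card_image_add A) (by exact_mod_cast card_le_card_image_mul A) ?_
  linarith

theorem stmt13 :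
    (∀ (F : Type) [Field F] [Fintype F] [DecidableEq F],
      Odd (Fintype.card F) →
      ∀ (A : Finset F),
        ((A.card : ℝ)) ^ 3
          ≤ (((A ×ˢ A).image (fun p => p.1 * p.2)).card : ℝ)
              * (A.card : ℝ) ^ 2
              * (((A ×ˢ A).image (fun p => p.1 + p.2)).card : ℝ)
              / Fintype.card F
            + Real.sqrt ((Fintype.card F : ℝ)
                * (((A ×ˢ A).image (fun p => p.1 * p.2)).card : ℝ)
                * (A.card : ℝ) ^ 2
                * (((A ×ˢ A).image (fun p => p.1 + p.2)).card : ℝ))) ∧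
    ∃ c : ℝ, 0 < c ∧
      ∀ (F : Type) [Field F] [Fintype F] [DecidableEq F],
        Odd (Fintype.card F) →
        ∀ (A : Finset F),
          c * min ((Fintype.card F : ℝ) * A.card)
              ((A.card : ℝ) ^ 4 / Fintype.card F)
            ≤ (((A ×ˢ A).image (fun p => p.1 + p.2)).card : ℝ)
              * (((A ×ˢ A).image (fun p => p.1 * p.2)).card : ℝ) := by
  refine ⟨fun F _ _ _ _ A => card_pow_three_le A, 1 / 4, by norm_num, fun F _ _ _ _ A => ?_⟩
  exact quarter_min_le_of_cube_le (by exact_mod_cast Fintype.card_pos) (by positivity)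
    (by positivity) (by positivity) (card_pow_three_le A)
end

section
/- Suppose A ⊆ F_q satisfies min(|A+A|, |A·A|) ≤ C|A| for an absolute constant C > 0. If |A| ≫ q^{2/3} then max(|A+A|, |A·A|) ≫ q; and if |A| ≪ q^{2/3} then max(|A+A|, |A·A|) ≫ |A|³/q. -/
/-!
Count the solutions of `x * y + z = w` with `x ∈ A⁻¹`, `y ∈ A * A`, `z ∈ A`, `w ∈ A + A`.
Every `(a, b, c) ∈ (A \ {0}) × A × A` gives the solution `(a⁻¹, a * b, c, b + c)`, so there are
at least `(|A| - 1) |A|²` of them. On the other hand, expanding the count in additive characters,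
the trivial character contributes `|A|² |A + A| |A * A| / q`, and the others at most
`|A| √(q |A + A| |A * A|)`: for `a ≠ 0` the bilinear sum `∑_{x ∈ X, y ∈ Y} ψ(a x y)` is at most
`√(q |X| |Y|)` by Cauchy–Schwarz and Parseval, and Parseval again bounds the two linear sums.
Since `|A + A| |A * A| = min * max ≤ C |A| max`, one of the two terms must carry the lower bound,
which gives `min (q, |A|³ / q) ≤ 16 C max`.
-/

open Finset
open scoped Pointwise

namespace AddChar

section CommRing

variable {R : Type*} [CommRing R] [Fintype R] [DecidableEq R] {ψ : AddChar R ℂ}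

theorem sum_sum_mul_eq_card_filter (hψ : ψ.IsPrimitive) {ι : Type*} (s : Finset ι)
    (f : ι → R) : ∑ a, ∑ i ∈ s, ψ (a * f i) = Fintype.card R * #{i ∈ s | f i = 0} := by
  rw [sum_comm]
  simp only [sum_mulShift _ hψ, Nat.cast_ite, Nat.cast_zero]
  rw [← sum_filter, sum_const, nsmul_eq_mul, mul_comm]

theorem sum_norm_sq_sum_mul (hψ : ψ.IsPrimitive) (s : Finset R) :
    ∑ a, ‖∑ x ∈ s, ψ (a * x)‖ ^ 2 = Fintype.card R * #s := by
  have hsq (a : R) :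
      (‖∑ x ∈ s, ψ (a * x)‖ : ℂ) ^ 2 = ∑ p ∈ s ×ˢ s, ψ (a * (p.1 - p.2)) := by
    rw [← Complex.mul_conj', map_sum, sum_mul_sum, sum_product]
    simp only [← map_neg_eq_conj, ← map_add_eq_mul, mul_add, mul_neg, sub_eq_add_neg]
  apply Complex.ofReal_injective
  push_cast
  simp_rw [hsq, sum_sum_mul_eq_card_filter hψ, sub_eq_zero, ← diag_eq_filter, diag_card]

theorem sum_norm_mul_norm_sum_mul_le (hψ : ψ.IsPrimitive) (s t : Finset R) :
    ∑ a, ‖∑ x ∈ s, ψ (a * x)‖ * ‖∑ y ∈ t, ψ (a * y)‖ ≤ Fintype.card R * √(#s * #t) := by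
  calc _ ≤ √(∑ a, ‖∑ x ∈ s, ψ (a * x)‖ ^ 2) * √(∑ a, ‖∑ y ∈ t, ψ (a * y)‖ ^ 2) :=
        Real.sum_mul_le_sqrt_mul_sqrt _ _ _
    _ = Fintype.card R * √(#s * #t) := by
      rw [sum_norm_sq_sum_mul hψ, sum_norm_sq_sum_mul hψ, ← Real.sqrt_mul (by positivity),
        show (Fintype.card R : ℝ) * #s * (Fintype.card R * #t) = Fintype.card R ^ 2 * (#s * #t)
          by ring, Real.sqrt_mul (by positivity), Real.sqrt_sq (by positivity)]

theorem sum_mul_mul_conj_eq_card_filter_mul_add_eq (hψ : ψ.IsPrimitive) (s t u v : Finset R) :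
    ∑ a, (∑ p ∈ s ×ˢ t, ψ (a * (p.1 * p.2))) * (∑ z ∈ u, ψ (a * z))
        * starRingEnd ℂ (∑ w ∈ v, ψ (a * w))
      = Fintype.card R * #{p ∈ (s ×ˢ t) ×ˢ (u ×ˢ v) | p.1.1 * p.1.2 + p.2.1 = p.2.2} := by
  have hexpand (a : R) : (∑ p ∈ s ×ˢ t, ψ (a * (p.1 * p.2))) * (∑ z ∈ u, ψ (a * z))
        * starRingEnd ℂ (∑ w ∈ v, ψ (a * w))
      = ∑ p ∈ (s ×ˢ t) ×ˢ (u ×ˢ v), ψ (a * (p.1.1 * p.1.2 + p.2.1 - p.2.2)) := by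
    simp only [map_sum, ← map_neg_eq_conj]
    rw [sum_mul_sum, sum_product (s ×ˢ t) (u ×ˢ v)]
    simp_rw [sum_mul, mul_sum, sum_product u v]
    refine sum_congr rfl fun _ _ ↦ sum_congr rfl fun _ _ ↦ sum_congr rfl fun _ _ ↦ ?_
    rw [← map_add_eq_mul, ← map_add_eq_mul]
    ring_nf
  simp_rw [hexpand, sum_sum_mul_eq_card_filter hψ, sub_eq_zero]

end CommRing

section Field

variable {F : Type*} [Field F] [Fintype F] [DecidableEq F] {ψ : AddChar F ℂ}

theorem norm_sum_sum_mul_mul_le (hψ : ψ.IsPrimitive) {a : F} (ha : a ≠ 0) (s t : Finset F) :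
    ‖∑ x ∈ s, ∑ y ∈ t, ψ (a * (x * y))‖ ≤ √(Fintype.card F * #s * #t) := by
  have hreindex : ∑ x ∈ s, ‖∑ y ∈ t, ψ (a * x * y)‖ ^ 2 ≤ Fintype.card F * #t :=
    calc _ ≤ ∑ x, ‖∑ y ∈ t, ψ (a * x * y)‖ ^ 2 :=
          sum_le_sum_of_subset_of_nonneg (subset_univ s) fun _ _ _ ↦ by positivity
      _ = ∑ b, ‖∑ y ∈ t, ψ (b * y)‖ ^ 2 :=
          Fintype.sum_equiv (Equiv.mulLeft₀ a ha) _ _ fun _ ↦ rfl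
      _ = Fintype.card F * #t := sum_norm_sq_sum_mul hψ t
  calc _ ≤ ∑ x ∈ s, 1 * ‖∑ y ∈ t, ψ (a * x * y)‖ := by
        simp_rw [one_mul, ← mul_assoc]
        exact norm_sum_le _ _
    _ ≤ √(∑ x ∈ s, 1 ^ 2) * √(∑ x ∈ s, ‖∑ y ∈ t, ψ (a * x * y)‖ ^ 2) :=
        Real.sum_mul_le_sqrt_mul_sqrt _ _ _
    _ ≤ √(#s) * √(Fintype.card F * #t) := by
        simp only [one_pow, sum_const, nsmul_eq_mul, mul_one]
        gcongr
    _ = √(Fintype.card F * #s * #t) := by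
        rw [← Real.sqrt_mul (by positivity)]
        ring_nf

theorem card_filter_mul_add_eq_le (hψ : ψ.IsPrimitive) (s t u v : Finset F) :
    (#{p ∈ (s ×ˢ t) ×ˢ (u ×ˢ v) | p.1.1 * p.1.2 + p.2.1 = p.2.2} : ℝ)
      ≤ #s * #t * #u * #v / Fintype.card F + √(Fintype.card F * #s * #t * #u * #v) := by
  set q : ℝ := (Fintype.card F : ℝ)
  set N := #{p ∈ (s ×ˢ t) ×ˢ (u ×ˢ v) | p.1.1 * p.1.2 + p.2.1 = p.2.2}
  set G : F → ℂ := fun a ↦ ∑ p ∈ s ×ˢ t, ψ (a * (p.1 * p.2))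
  set U : F → ℂ := fun a ↦ ∑ z ∈ u, ψ (a * z)
  set V : F → ℂ := fun a ↦ ∑ w ∈ v, ψ (a * w)
  have hfourier : ∑ a, G a * U a * starRingEnd ℂ (V a) = q * N :=
    sum_mul_mul_conj_eq_card_filter_mul_add_eq hψ s t u v
  have hzero : G 0 * U 0 * starRingEnd ℂ (V 0) = #s * #t * #u * #v := by
    simp [G, U, V, card_product, mul_assoc]
  have herr : ((q * N - #s * #t * #u * #v : ℝ) : ℂ)
      = ∑ a ∈ (univ : Finset F).erase 0, G a * U a * starRingEnd ℂ (V a) := by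
    rw [eq_sub_of_add_eq (sum_erase_add _ (fun a ↦ G a * U a * starRingEnd ℂ (V a)) (mem_univ 0)),
      hfourier, hzero]
    push_cast
    ring
  have hbound : ‖∑ a ∈ (univ : Finset F).erase 0, G a * U a * starRingEnd ℂ (V a)‖
      ≤ q * √(q * #s * #t * #u * #v) :=
    calc _ ≤ ∑ a ∈ (univ : Finset F).erase 0, √(q * #s * #t) * (‖U a‖ * ‖V a‖) := by
          refine (norm_sum_le _ _).trans (sum_le_sum fun a ha ↦ ?_)
          rw [norm_mul, norm_mul, Complex.norm_conj, mul_assoc]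
          gcongr
          simp only [G, sum_product]
          exact norm_sum_sum_mul_mul_le hψ (ne_of_mem_erase ha) s t
      _ ≤ √(q * #s * #t) * ∑ a, ‖U a‖ * ‖V a‖ := by
          rw [← mul_sum]
          gcongr
          exact erase_subset _ _
      _ ≤ √(q * #s * #t) * (q * √(#u * #v)) := by
          gcongr
          exact sum_norm_mul_norm_sum_mul_le hψ u v
      _ = q * √(q * #s * #t * #u * #v) := by
          rw [mul_left_comm, ← Real.sqrt_mul (by positivity)]
          ring_nf
  have hq : 0 < q := by positivity
  rw [← herr, Complex.norm_real, Real.norm_eq_abs] at hbound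
  rw [div_add' _ _ _ hq.ne', le_div_iff₀ hq]
  linarith [le_abs_self (q * N - #s * #t * #u * #v)]

end Field

end AddChar

theorem min_le_of_cube_le_add_sqrt {a q P : ℝ} (ha : 0 < a) (hq : 0 < q)
    (h : a ^ 3 / 2 ≤ a ^ 2 * P / q + a * √(q * P)) : min (q * a) (a ^ 4 / q) ≤ 16 * P := by
  have h' : a ^ 2 / 2 ≤ a * P / q + √(q * P) := by
    refine le_of_mul_le_mul_left ?_ ha
    calc a * (a ^ 2 / 2) = a ^ 3 / 2 := by ring
      _ ≤ a ^ 2 * P / q + a * √(q * P) := h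
      _ = a * (a * P / q + √(q * P)) := by ring
  by_cases hmain : a ^ 2 / 4 ≤ a * P / q
  · refine (min_le_left _ _).trans ?_
    rw [div_le_div_iff₀ (by norm_num) hq] at hmain
    nlinarith
  · refine (min_le_right _ _).trans ?_
    have hsqrt : a ^ 2 / 4 ≤ √(q * P) := by linarith
    have hsq : (a ^ 2 / 4) ^ 2 ≤ q * P := Real.le_sqrt' (by positivity) |>.mp hsqrt
    rw [div_le_iff₀ hq]
    nlinarith

section SumProduct

theorem card_pow_three_div_le_card_add_self {G : Type*} [AddGroup G] [DecidableEq G]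
    {A : Finset G} {q : ℝ} (hq : 0 < q) (hA : (#A : ℝ) ^ 2 ≤ q) : (#A : ℝ) ^ 3 / q ≤ #(A + A) :=
  calc (#A : ℝ) ^ 3 / q ≤ #A := by
        rw [div_le_iff₀ hq, pow_succ']
        gcongr
    _ ≤ #(A + A) := mod_cast card_le_card_add_self

variable {F : Type*} [Field F] [DecidableEq F]

theorem card_erase_zero_mul_le_card_filter_mul_add_eq (A : Finset F) :
    #(A.erase 0) * (#A * #A)
      ≤ #{p ∈ (A⁻¹ ×ˢ (A * A)) ×ˢ (A ×ˢ (A + A)) | p.1.1 * p.1.2 + p.2.1 = p.2.2} := by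
  rw [← card_product, ← card_product]
  refine card_le_card_of_injOn (fun x ↦ ((x.1⁻¹, x.1 * x.2.1), (x.2.2, x.2.1 + x.2.2)))
    (fun x hx ↦ ?_) (fun x hx y _ hxy ↦ ?_)
  · simp only [coe_product, Set.mem_prod, mem_coe, mem_erase] at hx
    obtain ⟨⟨ha0, ha⟩, hb, hc⟩ := hx
    simp only [coe_filter, Set.mem_ofPred_eq, mem_product]
    refine ⟨⟨⟨inv_mem_inv ha, mul_mem_mul ha hb⟩, hc, add_mem_add hb hc⟩, ?_⟩
    rw [inv_mul_cancel_left₀ ha0]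
  · simp only [coe_product, Set.mem_prod, mem_coe, mem_erase] at hx
    simp only [Prod.mk.injEq] at hxy
    obtain ⟨⟨hinv, hmul⟩, hc, -⟩ := hxy
    have ha : x.1 = y.1 := inv_injective hinv
    rw [ha] at hmul
    have hb : x.2.1 = y.2.1 := mul_left_cancel₀ (ha ▸ hx.1.1) hmul
    exact Prod.ext ha (Prod.ext hb hc)

variable [Fintype F]

theorem min_le_card_add_mul_card_mul (A : Finset F) (hA : 2 ≤ #A) :
    min ((Fintype.card F : ℝ) * #A) (#A ^ 4 / Fintype.card F) ≤ 16 * #(A + A) * #(A * A) := by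
  set N := #{p ∈ (A⁻¹ ×ˢ (A * A)) ×ˢ (A ×ˢ (A + A)) | p.1.1 * p.1.2 + p.2.1 = p.2.2}
  have hlower : (#A : ℝ) ^ 3 / 2 ≤ N := by
    have h := card_erase_zero_mul_le_card_filter_mul_add_eq A
    have herase : (#A : ℝ) ≤ #(A.erase 0) + 1 := by
      exact_mod_cast Nat.sub_le_iff_le_add.mp (pred_card_le_card_erase (a := 0))
    have : ((#A : ℝ) - 1) * (#A * #A) ≤ N := by
      refine (mul_le_mul_of_nonneg_right (by linarith) (by positivity)).trans ?_
      exact_mod_cast h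
    have h2 : (2 : ℝ) ≤ #A := by exact_mod_cast hA
    nlinarith
  have hupper := AddChar.card_filter_mul_add_eq_le
    (AddChar.FiniteField.primitiveChar_to_Complex_isPrimitive F) A⁻¹ (A * A) A (A + A)
  rw [card_inv] at hupper
  have hA0 : (0 : ℝ) < #A := by exact_mod_cast (by omega : 0 < #A)
  have hq : (0 : ℝ) < Fintype.card F := by exact_mod_cast Fintype.card_pos
  rw [mul_assoc]
  refine min_le_of_cube_le_add_sqrt hA0 hq (hlower.trans (hupper.trans_eq ?_))
  rw [show (Fintype.card F : ℝ) * #A * #(A * A) * #A * #(A + A)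
      = #A ^ 2 * (Fintype.card F * (#(A + A) * #(A * A))) by ring,
    Real.sqrt_mul (by positivity), Real.sqrt_sq hA0.le]
  ring

theorem min_le_mul_max_of_min_le {C : ℝ} (A : Finset F) (hA : 2 ≤ #A)
    (hmin : min (#(A + A) : ℝ) #(A * A) ≤ C * #A) :
    min (Fintype.card F : ℝ) (#A ^ 3 / Fintype.card F)
      ≤ 16 * C * max (#(A + A) : ℝ) #(A * A) := by
  have hA0 : (0 : ℝ) < #A := by exact_mod_cast (by omega : 0 < #A)
  refine le_of_mul_le_mul_right ?_ hA0
  calc min (Fintype.card F : ℝ) (#A ^ 3 / Fintype.card F) * #A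
      = min ((Fintype.card F : ℝ) * #A) (#A ^ 4 / Fintype.card F) := by
        rw [min_mul_of_nonneg _ _ hA0.le]
        ring_nf
    _ ≤ 16 * (min (#(A + A) : ℝ) #(A * A) * max (#(A + A) : ℝ) #(A * A)) := by
        rw [min_mul_max, ← mul_assoc]
        exact min_le_card_add_mul_card_mul A hA
    _ ≤ 16 * (C * #A * max (#(A + A) : ℝ) #(A * A)) := by gcongr
    _ = 16 * C * max (#(A + A) : ℝ) #(A * A) * #A := by ring

end SumProduct

theorem Real.rpow_two_div_three_pow_three {x : ℝ} (hx : 0 ≤ x) :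
    (x ^ ((2 : ℝ) / 3)) ^ 3 = x ^ 2 := by
  rw [← Real.rpow_natCast, ← Real.rpow_mul hx]
  norm_num

theorem stmt14 (C : ℝ) (hC : 0 < C) :
    ∃ c : ℝ, 0 < c ∧
      ∀ (F : Type) [Field F] [Fintype F] [DecidableEq F],
        Odd (Fintype.card F) →
        ∀ (A : Finset F),
          (min ((((A ×ˢ A).image (fun p => p.1 + p.2)).card : ℝ))
              ((((A ×ˢ A).image (fun p => p.1 * p.2)).card : ℝ))
            ≤ C * A.card) →
          (((A.card : ℝ) ≥ (Fintype.card F : ℝ) ^ ((2 : ℝ) / 3) →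
            max ((((A ×ˢ A).image (fun p => p.1 + p.2)).card : ℝ))
                ((((A ×ˢ A).image (fun p => p.1 * p.2)).card : ℝ))
              ≥ c * Fintype.card F) ∧
          ((A.card : ℝ) ≤ (Fintype.card F : ℝ) ^ ((2 : ℝ) / 3) →
            max ((((A ×ˢ A).image (fun p => p.1 + p.2)).card : ℝ))
                ((((A ×ˢ A).image (fun p => p.1 * p.2)).card : ℝ))
              ≥ c * (A.card : ℝ) ^ 3 / Fintype.card F)) := by
  refine ⟨min 1 (1 / (16 * C)), by positivity, fun F _ _ _ _ A hmin ↦ ?_⟩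
  rw [image_add_product, image_mul_product] at hmin ⊢
  set q : ℝ := (Fintype.card F : ℝ)
  set M := max (#(A + A) : ℝ) #(A * A)
  have hq : 1 < q := Nat.one_lt_cast.mpr Fintype.one_lt_card
  have hM {x : ℝ} (hx : 0 ≤ x) (hxM : x ≤ 16 * C * M) : min 1 (1 / (16 * C)) * x ≤ M :=
    calc _ ≤ 1 / (16 * C) * x := by gcongr; exact min_le_right _ _
      _ ≤ M := by rw [one_div_mul_eq_div, div_le_iff₀ (by positivity)]; linarith
  refine ⟨fun hlarge ↦ ?_, fun hsmall ↦ ?_⟩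
  · have hcube : q ^ 2 ≤ #A ^ 3 := by
      rw [← Real.rpow_two_div_three_pow_three (by positivity)]
      gcongr
    have hA : 2 ≤ #A := by
      by_contra! hA
      have : (#A : ℝ) ^ 3 ≤ 1 := pow_le_one₀ (by positivity) (mod_cast Nat.le_of_lt_succ hA)
      nlinarith
    have h := min_le_mul_max_of_min_le A hA hmin
    rw [min_eq_left ((le_div_iff₀ (by positivity)).2 (by nlinarith))] at h
    exact hM (by positivity) h
  · have hcube : (#A : ℝ) ^ 3 ≤ q ^ 2 := by
      rw [← Real.rpow_two_div_three_pow_three (by positivity)]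
      gcongr
    rw [ge_iff_le, mul_div_assoc]
    rcases lt_or_ge #A 2 with hA | hA
    · have hA1 : (#A : ℝ) ^ 2 ≤ q := by
        have : (#A : ℝ) ^ 2 ≤ 1 := pow_le_one₀ (by positivity) (mod_cast Nat.le_of_lt_succ hA)
        linarith
      exact (mul_le_of_le_one_left (by positivity) (min_le_left _ _)).trans
        (le_max_of_le_left (card_pow_three_div_le_card_add_self (by positivity) hA1))
    · have h := min_le_mul_max_of_min_le A hA hmin
      rw [min_eq_right ((div_le_iff₀ (by positivity)).2 (by nlinarith))] at h
      exact hM (by positivity) h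
end

section
/- Let χ be a nontrivial additive character of F_{q^n}, n ≥ 2. Then |∑_{c : N(c) = 1} χ(c)| = |(1/(q-1)) ∑_{d ∈ F_{q^n}*} χ(d^{q-1})| < q^{n/2}, where N is the norm map from F_{q^n} to F_q. -/
/-!
The norm-one elements of `K = 𝔽_{q^n}` are the `m`-th roots of unity, `m = (q^n - 1)/(q - 1)`,
and in the cyclic group `Kˣ` these are exactly the `(q - 1)`-th powers, each attained `q - 1`
times; this gives the identity. For the bound a second-moment argument replaces Weil's
estimate: put `T(a) = ∑_{N(c) = 1} χ(a c)`. Orthogonality of additive characters gives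
`∑_a |T(a)|² = q^n m`, while `T(a) = T(1)` for each of the `m` norm-one `a` and `T(0) = m`.
Hence `m |T(1)|² + m² ≤ q^n m`, i.e. `|T(1)|² ≤ q^n - m < q^n`.
-/

open Finset

theorem MonoidHom.card_filter_apply_eq {G H : Type*} [Group G] [Group H] [Fintype G]
    [DecidableEq H] (φ : G →* H) (g₀ : G) : #{g | φ g = φ g₀} = #{g | φ g = 1} := by
  refine card_nbij' (g₀⁻¹ * ·) (g₀ * ·) ?_ ?_ ?_ ?_ <;> intro g hg <;> simp_all

namespace IsCyclic

variable {G : Type*} [CommGroup G] [IsCyclic G]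

theorem range_powMonoidHom_eq_ker [Finite G] {k m : ℕ} (h : Nat.card G = k * m) :
    (powMonoidHom k : G →* G).range = (powMonoidHom m).ker := by
  have hk : k ≠ 0 := left_ne_zero_of_mul (h ▸ Nat.card_pos.ne')
  refine Subgroup.eq_of_le_of_card_ge ?_ ?_
  · rintro _ ⟨g, rfl⟩
    simp [← pow_mul, ← h, pow_card_eq_one']
  · rw [card_powMonoidHom_range, card_powMonoidHom_ker, h, Nat.gcd_mul_left_left,
      Nat.gcd_mul_right_left, Nat.mul_div_cancel_left _ (Nat.pos_of_ne_zero hk)]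

theorem card_filter_pow_eq_one [Fintype G] [DecidableEq G] (k : ℕ) :
    #{g : G | g ^ k = 1} = (Fintype.card G).gcd k := by
  simpa [Nat.card_eq_fintype_card, Fintype.card_subtype] using card_powMonoidHom_ker (G := G) k

theorem sum_comp_pow {M : Type*} [Fintype G] [DecidableEq G] [AddCommMonoid M] {k m : ℕ}
    (h : Fintype.card G = k * m) (f : G → M) :
    ∑ g, f (g ^ k) = k • ∑ g with g ^ m = 1, f g := by
  have hrange := range_powMonoidHom_eq_ker (Nat.card_eq_fintype_card.trans h)
  have hmaps : ∀ g ∈ univ, g ^ k ∈ ({c | c ^ m = 1} : Finset G) := fun g _ => by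
    simpa using hrange.le ⟨g, rfl⟩
  rw [← sum_fiberwise_of_maps_to hmaps, smul_sum]
  refine sum_congr rfl fun c hc => ?_
  obtain ⟨g₀, rfl⟩ : c ∈ (powMonoidHom k).range := hrange ▸ by simpa using hc
  rw [sum_congr rfl fun g hg => by rw [(mem_filter.1 hg).2], sum_const]
  congr 1
  simpa [card_filter_pow_eq_one, h, Nat.gcd_mul_right_left] using
    (powMonoidHom k : G →* G).card_filter_apply_eq g₀

end IsCyclic

namespace FiniteField

theorem card_sub_one_dvd_card_sub_one (F K : Type*) [Field F] [Field K] [Fintype F] [Fintype K]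
    [Algebra F K] : Fintype.card F - 1 ∣ Fintype.card K - 1 := by
  rw [Module.card_eq_pow_finrank (K := F) (V := K)]
  exact Nat.sub_one_dvd_pow_sub_one _ _

theorem norm_eq_one_iff {F K : Type*} [Field F] [Field K] [Algebra F K] [Finite K] (x : K) :
    Algebra.norm F x = 1 ↔ x ^ ((Nat.card K - 1) / (Nat.card F - 1)) = 1 := by
  rw [← (algebraMap F K).injective.eq_iff, map_one, algebraMap_norm_eq_pow]

variable {K M : Type*} [Field K] [Fintype K] [DecidableEq K] [AddCommMonoid M]

theorem sum_units_eq_sum_ne_zero (f : K → M) : ∑ u : Kˣ, f u = ∑ x with x ≠ 0, f x := by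
  rw [sum_subtype (p := (· ≠ 0)) _ (fun x => by simp) f]
  exact Fintype.sum_equiv unitsEquivNeZero _ _ fun u => rfl

theorem sum_comp_pow {k m : ℕ} (h : Fintype.card K - 1 = k * m) (f : K → M) :
    ∑ d with d ≠ 0, f (d ^ k) = k • ∑ c with c ^ m = 1, f c := by
  have hm : m ≠ 0 := right_ne_zero_of_mul (h ▸ (Nat.sub_pos_of_lt Fintype.one_lt_card).ne')
  have hne : ∀ c : K, c ^ m = 1 → c ≠ 0 := by
    rintro c hc rfl
    simp [hm] at hc
  have hroots : ∑ c with c ^ m = 1, f c = ∑ u : Kˣ with u ^ m = 1, f u :=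
    sum_bij' (fun c hc => Units.mk0 c (hne c (mem_filter.1 hc).2)) (fun u _ => (u : K))
      (by simp_all [Units.ext_iff]) (by simp_all [Units.ext_iff]) (by simp) (by simp) (by simp)
  rw [hroots, ← sum_units_eq_sum_ne_zero (fun d => f (d ^ k))]
  simpa using IsCyclic.sum_comp_pow (G := Kˣ) (by rwa [Fintype.card_units]) (fun u => f u)

end FiniteField

namespace AddChar

theorem sum_norm_sum_mul_sq {R : Type*} [CommRing R] [Fintype R] [DecidableEq R]
    {ψ : AddChar R ℂ} (hψ : ψ.IsPrimitive) (s : Finset R) :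
    ∑ a, ‖∑ c ∈ s, ψ (a * c)‖ ^ 2 = Fintype.card R * #s := by
  have hsq : ∀ a, ((‖∑ c ∈ s, ψ (a * c)‖ ^ 2 : ℝ) : ℂ) = ∑ c ∈ s, ∑ c' ∈ s, ψ (a * (c - c')) := by
    intro a
    rw [← Complex.normSq_eq_norm_sq, ← Complex.mul_conj, map_sum, sum_mul_sum]
    refine sum_congr rfl fun c _ => sum_congr rfl fun c' _ => ?_
    rw [← map_neg_eq_conj, ← map_add_eq_mul, mul_sub, sub_eq_add_neg]
  apply Complex.ofReal_injective
  rw [Complex.ofReal_sum]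
  simp_rw [hsq]
  rw [sum_comm]
  simp_rw [sum_comm (s := univ)]
  simp [sum_mulShift _ hψ, sub_eq_zero, mul_comm]

theorem norm_sum_sq_le {K : Type*} [Field K] [Fintype K] [DecidableEq K]
    {ψ : AddChar K ℂ} (hψ : ψ ≠ 1) {s : Finset K} (hs0 : (0 : K) ∉ s)
    (hmul : ∀ a ∈ s, ∀ b ∈ s, a * b ∈ s) :
    ‖∑ c ∈ s, ψ c‖ ^ 2 ≤ Fintype.card K - #s := by
  have hshift : ∀ a ∈ s, ∑ c ∈ s, ψ (a * c) = ∑ c ∈ s, ψ c := fun a ha => by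
    have hinj : Function.Injective (a * ·) := mul_right_injective₀ (ne_of_mem_of_not_mem ha hs0)
    have himage : s.image (a * ·) = s :=
      eq_of_subset_of_card_le (image_subset_iff.2 fun c hc => hmul a ha c hc)
        (card_image_of_injective _ hinj).ge
    conv_rhs => rw [← himage, sum_image hinj.injOn]
  have hmoments : #s * ‖∑ c ∈ s, ψ c‖ ^ 2 + #s ^ 2 ≤ Fintype.card K * #s := by
    rw [← sum_norm_sum_mul_sq (IsPrimitive.of_ne_one hψ) s]
    calc #s * ‖∑ c ∈ s, ψ c‖ ^ 2 + #s ^ 2 = ∑ a ∈ insert 0 s, ‖∑ c ∈ s, ψ (a * c)‖ ^ 2 := by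
          have hS : ∑ a ∈ s, ‖∑ c ∈ s, ψ (a * c)‖ ^ 2 = ∑ a ∈ s, ‖∑ c ∈ s, ψ c‖ ^ 2 :=
            sum_congr rfl fun a ha => by rw [hshift a ha]
          simp [sum_insert hs0, hS, add_comm]
      _ ≤ _ := sum_le_sum_of_subset_of_nonneg (subset_univ _) fun _ _ _ => by positivity
  rcases s.eq_empty_or_nonempty with rfl | hs
  · simp
  · have : (0 : ℝ) < #s := by exact_mod_cast hs.card_pos
    nlinarith

end AddChar

theorem stmt16_general (F K : Type) [Field F] [Field K] [Fintype F] [Fintype K]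
    [DecidableEq F] [DecidableEq K] [Algebra F K]
    (χ : AddChar K ℂ) (hχ : χ ≠ 1) :
    ‖∑ c ∈ Finset.univ.filter (fun c : K => Algebra.norm F c = 1), χ c‖
        = ‖(1 / ((Fintype.card F : ℂ) - 1))
            * ∑ d ∈ Finset.univ.filter (fun d : K => d ≠ 0),
                χ (d ^ (Fintype.card F - 1))‖ ∧
    ‖∑ c ∈ Finset.univ.filter (fun c : K => Algebra.norm F c = 1), χ c‖
        < Real.sqrt (Fintype.card K) := by
  set S := univ.filter (fun c : K => Algebra.norm F c = 1)
  set q := Fintype.card F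
  set m := (Fintype.card K - 1) / (q - 1)
  have hqm : Fintype.card K - 1 = (q - 1) * m :=
    (Nat.mul_div_cancel' (FiniteField.card_sub_one_dvd_card_sub_one F K)).symm
  have hS : S = univ.filter (· ^ m = 1) :=
    filter_congr fun c _ => by
      rw [FiniteField.norm_eq_one_iff, Nat.card_eq_fintype_card, Nat.card_eq_fintype_card]
  have hq : (q : ℂ) - 1 ≠ 0 := sub_ne_zero.2 (by exact_mod_cast (Fintype.one_lt_card (α := F)).ne')
  refine ⟨?_, ?_⟩
  · rw [FiniteField.sum_comp_pow hqm, hS, nsmul_eq_mul,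
      Nat.cast_sub Fintype.one_lt_card.le, Nat.cast_one, one_div, inv_mul_cancel_left₀ hq]
  · have hmul : ∀ a ∈ S, ∀ b ∈ S, a * b ∈ S := fun a ha b hb => by
      simp only [S, mem_filter, mem_univ, true_and, map_mul] at ha hb ⊢
      rw [ha, hb, one_mul]
    have hle := AddChar.norm_sum_sq_le hχ (by simp [S]) hmul
    have hpos : (0 : ℝ) < #S := by exact_mod_cast card_pos.2 ⟨1, by simp [S]⟩
    rw [Real.lt_sqrt (norm_nonneg _)]
    linarith

theorem stmt16 (F K : Type) [Field F] [Field K] [Fintype F] [Fintype K]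
    [DecidableEq F] [DecidableEq K] [Algebra F K]
    (n : ℕ) (hn : 2 ≤ n)
    (hcard : Fintype.card K = Fintype.card F ^ n)
    (χ : AddChar K ℂ) (hχ : χ ≠ 1) :
    ‖∑ c ∈ Finset.univ.filter (fun c : K => Algebra.norm F c = 1), χ c‖
        = ‖(1 / ((Fintype.card F : ℂ) - 1))
            * ∑ d ∈ Finset.univ.filter (fun d : K => d ≠ 0),
                χ (d ^ (Fintype.card F - 1))‖ ∧
    ‖∑ c ∈ Finset.univ.filter (fun c : K => Algebra.norm F c = 1), χ c‖
        < Real.sqrt (Fintype.card K) :=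
  stmt16_general F K χ hχ
end
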